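/- arXiv:1301.0989 — 5 statements merged into one kernel-verified Lean document; each statement's English description precedes it below -/
import Mathlib

section
/- Let x₀, φ, t₀, ρ be as in the context, let α ∈ Sⁿ, and let r_α be any element of G preserving ℝ^{n+1}×{0} with r_α(α,1) = e₁. If there exist infinitely many pairs (p,q) ∈ ℤ^{n+1} × ℕ with q ≥ x₀, p/q ∈ Sⁿ, and ‖α − p/q‖ < φ(q), then there exists a sequence t_k → ∞ in [t₀,∞) such that ω(g_{t_k} r_α Λ₀) < 2ρ(t_k). -/
open MeasureTheory

/-- The unit Euclidean sphere `Sⁿ` in `ℝ^{n+1}` (the ambient space `Fin (n+1) → ℝ`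
carries the supremum norm). -/
noncomputable def unitSphere (n : ℕ) : Set (Fin (n + 1) → ℝ) :=
  {x | ∑ i, x i ^ 2 = 1}

/-- The rational point `p/q` in `ℝ^{n+1}`. -/
noncomputable def ratPt (n : ℕ) (p : Fin (n + 1) → ℤ) (q : ℕ) : Fin (n + 1) → ℝ :=
  fun i => (p i : ℝ) / (q : ℝ)

/-- The quadratic form `Q(x) = x₁² + ⋯ + x_{n+1}² − x_{n+2}²` on `ℝ^{n+2}`. -/
noncomputable def Qform (n : ℕ) (x : Fin (n + 2) → ℝ) : ℝ :=
  (∑ i : Fin (n + 1), x i.castSucc ^ 2) - x (Fin.last (n + 1)) ^ 2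

/-- `Λ₀ = ℤ^{n+2} ∩ L`, the integer points of the light cone `L = {Q = 0}`. -/
noncomputable def Lambda0 (n : ℕ) : Set (Fin (n + 2) → ℝ) :=
  {v | (∀ i, ∃ m : ℤ, v i = (m : ℝ)) ∧ Qform n v = 0}

/-- Membership in `G = SO(Q)`: determinant one and preservation of `Q`. -/
def isSOQ (n : ℕ) (g : Matrix (Fin (n + 2)) (Fin (n + 2)) ℝ) : Prop :=
  g.det = 1 ∧ ∀ x, Qform n (g.mulVec x) = Qform n x

/-- The one-parameter diagonal flow `g_t`. -/
noncomputable def gFlow (n : ℕ) (t : ℝ) : Matrix (Fin (n + 2)) (Fin (n + 2)) ℝ :=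
  Matrix.of fun i j =>
    if i = 0 ∧ j = 0 then Real.cosh t
    else if i = 0 ∧ j = Fin.last (n + 1) then -Real.sinh t
    else if i = Fin.last (n + 1) ∧ j = 0 then -Real.sinh t
    else if i = Fin.last (n + 1) ∧ j = Fin.last (n + 1) then Real.cosh t
    else if i = j then 1 else 0

/-- The vector `e₁ = (1,0,…,0,1) ∈ L`. -/
noncomputable def eOne (n : ℕ) : Fin (n + 2) → ℝ :=
  fun i => if i = 0 then 1 else if i = Fin.last (n + 1) then 1 else 0

/-- The embedding `α ↦ (α,1)` of `Sⁿ` into the light cone. -/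
noncomputable def embedS (n : ℕ) (α : Fin (n + 1) → ℝ) : Fin (n + 2) → ℝ :=
  Fin.snoc α 1

/-- The vector `(p,q) ∈ ℝ^{n+2}` with first `n+1` coordinates `p` and last coordinate `q`. -/
noncomputable def vecPQ (n : ℕ) (p : Fin (n + 1) → ℤ) (q : ℕ) : Fin (n + 2) → ℝ :=
  Fin.snoc (fun i => (p i : ℝ)) (q : ℝ)

/-- `g` preserves the subspace `ℝ^{n+1} × {0}`. -/
def preservesHyperplane (n : ℕ) (g : Matrix (Fin (n + 2)) (Fin (n + 2)) ℝ) : Prop :=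
  ∀ x : Fin (n + 2) → ℝ, x (Fin.last (n + 1)) = 0 → g.mulVec x (Fin.last (n + 1)) = 0

/-- `ω(Λ)`: the infimum of the (sup) norms of the nonzero vectors of `Λ`. -/
noncomputable def omegaMin (n : ℕ) (Λ : Set (Fin (n + 2) → ℝ)) : ℝ :=
  sInf ((fun v => ‖v‖) '' {v | v ∈ Λ ∧ v ≠ 0})

/-- The lattice `g Λ₀`. -/
noncomputable def latticeOf (n : ℕ) (g : Matrix (Fin (n + 2)) (Fin (n + 2)) ℝ) :
    Set (Fin (n + 2) → ℝ) :=
  (fun v => g.mulVec v) '' Lambda0 n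

/-!
A rational point `p/q` of `Sⁿ` is the integral light-cone vector `v = (p, q)`. Writing
`v = q (α, 1) + (p - qα, 0)` gives `r_α v = q e₁ + z` with `z` horizontal and
`Q(z) = |p - qα|²`, so `Q(r_α v) = 0` forces `z₀ = -|p - qα|²/(2q)`. On the light cone the sup
norm is the absolute value of the last coordinate, and the last coordinate of `g_t r_α v` is
`q e⁻ᵗ + sinh t · |p - qα|²/(2q)`. At the time `t` with `e⁻ᵗ = √(n+1) φ(q)/2`, the bound
`|p - qα|² < (n+1) q² φ(q)²` makes this less than `2 q e⁻ᵗ = 2ρ(t)`; infinitely many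
approximations give such times tending to infinity.
-/

open Matrix Filter Topology

variable {n : ℕ}

theorem gFlow_mulVec_zero (t : ℝ) (y : Fin (n + 2) → ℝ) :
    (gFlow n t *ᵥ y) 0 = Real.cosh t * y 0 - Real.sinh t * y (Fin.last (n + 1)) := by
  rw [mulVec, dotProduct, Fintype.sum_eq_add 0 (Fin.last (n + 1)) Fin.last_pos.ne]
  · simp [gFlow, sub_eq_add_neg]
  · intro j hj; simp [gFlow, hj, Ne.symm hj.1]

theorem gFlow_mulVec_last (t : ℝ) (y : Fin (n + 2) → ℝ) :
    (gFlow n t *ᵥ y) (Fin.last (n + 1)) =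
      -Real.sinh t * y 0 + Real.cosh t * y (Fin.last (n + 1)) := by
  rw [mulVec, dotProduct, Fintype.sum_eq_add 0 (Fin.last (n + 1)) Fin.last_pos.ne]
  · simp [gFlow, Fin.last_pos.ne']
  · intro j hj; simp [gFlow, hj, Ne.symm hj.2]

theorem gFlow_mulVec_of_ne (t : ℝ) (y : Fin (n + 2) → ℝ) {i : Fin (n + 2)} (hi0 : i ≠ 0)
    (hil : i ≠ Fin.last (n + 1)) : (gFlow n t *ᵥ y) i = y i := by
  rw [mulVec, dotProduct, Fintype.sum_eq_single i]
  · simp [gFlow, hi0, hil]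
  · intro j hj; simp [gFlow, hi0, hil, Ne.symm hj]

theorem Qform_gFlow_mulVec (t : ℝ) (y : Fin (n + 2) → ℝ) :
    Qform n (gFlow n t *ᵥ y) = Qform n y := by
  have hmid : ∀ j : Fin n, (gFlow n t *ᵥ y) j.succ.castSucc = y j.succ.castSucc :=
    fun j => gFlow_mulVec_of_ne t y (by simp [Fin.ext_iff]) (Fin.castSucc_lt_last _).ne
  simp only [Qform, Fin.sum_univ_succ, Fin.castSucc_zero, hmid, gFlow_mulVec_zero,
    gFlow_mulVec_last]
  linear_combination (y 0 ^ 2 - y (Fin.last (n + 1)) ^ 2) * Real.cosh_sq_sub_sinh_sq t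

theorem norm_eq_abs_last_of_Qform_eq_zero {w : Fin (n + 2) → ℝ} (hw : Qform n w = 0) :
    ‖w‖ = |w (Fin.last (n + 1))| := by
  refine le_antisymm ((pi_norm_le_iff_of_nonneg (abs_nonneg _)).2 fun i => ?_) ?_
  · rw [Real.norm_eq_abs, ← sq_le_sq]
    induction i using Fin.lastCases with
    | last => exact le_rfl
    | cast j =>
      rw [Qform, sub_eq_zero] at hw
      exact hw ▸ Finset.single_le_sum (f := fun i : Fin (n + 1) => w i.castSucc ^ 2)
        (fun i _ => sq_nonneg _) (Finset.mem_univ j)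
  · simpa using norm_le_pi_norm w (Fin.last (n + 1))

theorem Qform_add_smul_eOne (z : Fin (n + 2) → ℝ) (s : ℝ) :
    Qform n (z + s • eOne n) = Qform n z + 2 * s * (z 0 - z (Fin.last (n + 1))) := by
  have hmid : ∀ j : Fin n, eOne n j.succ.castSucc = 0 := fun j => by simp [eOne]
  have h0 : eOne n 0 = 1 := if_pos rfl
  have hlast : eOne n (Fin.last (n + 1)) = 1 := by simp [eOne]
  simp only [Qform, Fin.sum_univ_succ, Fin.castSucc_zero, Pi.add_apply, Pi.smul_apply,
    smul_eq_mul, hmid, h0, hlast, mul_zero, add_zero]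
  ring

theorem omegaMin_le_norm {Λ : Set (Fin (n + 2) → ℝ)} {v : Fin (n + 2) → ℝ} (hv : v ∈ Λ)
    (hv0 : v ≠ 0) : omegaMin n Λ ≤ ‖v‖ :=
  csInf_le ⟨0, by rintro _ ⟨w, -, rfl⟩; exact norm_nonneg w⟩ ⟨v, ⟨hv, hv0⟩, rfl⟩

theorem embedS_last (α : Fin (n + 1) → ℝ) : embedS n α (Fin.last (n + 1)) = 1 :=
  Fin.snoc_last _ _

theorem sum_sq_eq_of_ratPt_mem_unitSphere {p : Fin (n + 1) → ℤ} {q : ℕ} (hq : 0 < q)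
    (h : ratPt n p q ∈ unitSphere n) : ∑ i, (p i : ℝ) ^ 2 = (q : ℝ) ^ 2 := by
  simp only [unitSphere, Set.mem_ofPred_eq, ratPt, div_pow, ← Finset.sum_div] at h
  rwa [div_eq_one_iff_eq (by positivity)] at h

theorem vecPQ_mem_Lambda0 {p : Fin (n + 1) → ℤ} {q : ℕ} (hq : 0 < q)
    (h : ratPt n p q ∈ unitSphere n) : vecPQ n p q ∈ Lambda0 n := by
  refine ⟨fun i => ?_, ?_⟩
  · induction i using Fin.lastCases with
    | last => exact ⟨q, by simp [vecPQ]⟩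
    | cast j => exact ⟨p j, by simp [vecPQ]⟩
  · simp [Qform, vecPQ, sum_sq_eq_of_ratPt_mem_unitSphere hq h]

theorem Qform_vecPQ_sub_smul_embedS (α : Fin (n + 1) → ℝ) (p : Fin (n + 1) → ℤ) (q : ℕ) :
    Qform n (vecPQ n p q - (q : ℝ) • embedS n α) = ∑ i, ((p i : ℝ) - q * α i) ^ 2 := by
  simp [Qform, vecPQ, embedS]

theorem abs_sub_mul_lt_of_norm_sub_ratPt_lt {α : Fin (n + 1) → ℝ} {p : Fin (n + 1) → ℤ}
    {q : ℕ} (hq : 0 < q) {ε : ℝ} (h : ‖α - ratPt n p q‖ < ε) (i : Fin (n + 1)) :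
    |(p i : ℝ) - q * α i| < q * ε := by
  have hqR : (0 : ℝ) < q := Nat.cast_pos.2 hq
  have hi : |α i - p i / q| < ε := (norm_le_pi_norm (α - ratPt n p q) i).trans_lt h
  rw [show (p i : ℝ) - q * α i = -(q * (α i - p i / q)) by field_simp; ring, abs_neg,
    abs_mul, abs_of_pos hqR]
  exact mul_lt_mul_of_pos_left hi hqR

theorem finite_setOf_ratPt_mem_unitSphere_snd_le (N : ℕ) :
    {pq : (Fin (n + 1) → ℤ) × ℕ |
      0 < pq.2 ∧ ratPt n pq.1 pq.2 ∈ unitSphere n ∧ pq.2 ≤ N}.Finite := by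
  refine ((Set.Finite.pi' fun _ => Set.finite_Icc (-(N : ℤ)) N).prod
    (Set.finite_Iic N)).subset ?_
  rintro ⟨p, q⟩ ⟨hq, hpq, hqN⟩
  refine ⟨fun i => ?_, hqN⟩
  have hpi : (p i : ℝ) ^ 2 ≤ (q : ℝ) ^ 2 :=
    sum_sq_eq_of_ratPt_mem_unitSphere hq hpq ▸ Finset.single_le_sum
      (f := fun j => (p j : ℝ) ^ 2) (fun j _ => sq_nonneg _) (Finset.mem_univ i)
  have hpi' : |(p i : ℝ)| ≤ N :=
    calc |(p i : ℝ)| ≤ |(q : ℝ)| := sq_le_sq.1 hpi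
      _ ≤ N := by rw [Nat.abs_cast]; exact_mod_cast hqN
  exact abs_le.1 (by exact_mod_cast hpi')

theorem Set.Infinite.exists_lt_snd_of_ratPt_mem_unitSphere
    {S : Set ((Fin (n + 1) → ℤ) × ℕ)} (hS : S.Infinite)
    (hS_sphere : ∀ pq ∈ S, 0 < pq.2 ∧ ratPt n pq.1 pq.2 ∈ unitSphere n) (N : ℕ) :
    ∃ pq ∈ S, N < pq.2 := by
  obtain ⟨pq, hpqS, hpqN⟩ := (hS.sdiff (finite_setOf_ratPt_mem_unitSphere_snd_le N)).nonempty
  exact ⟨pq, hpqS, not_le.1 fun h => hpqN ⟨(hS_sphere pq hpqS).1, (hS_sphere pq hpqS).2, h⟩⟩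

section LightConeChart

variable {α : Fin (n + 1) → ℝ} {r : Matrix (Fin (n + 2)) (Fin (n + 2)) ℝ}

theorem mulVec_eq_mulVec_sub_add_smul_eOne (hr : r *ᵥ embedS n α = eOne n)
    (v : Fin (n + 2) → ℝ) :
    r *ᵥ v =
      r *ᵥ (v - v (Fin.last (n + 1)) • embedS n α) + v (Fin.last (n + 1)) • eOne n := by
  rw [mulVec_sub, mulVec_smul, hr, sub_add_cancel]

theorem mulVec_last_of_preservesHyperplane (hP : preservesHyperplane n r)
    (hr : r *ᵥ embedS n α = eOne n) (v : Fin (n + 2) → ℝ) :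
    (r *ᵥ v) (Fin.last (n + 1)) = v (Fin.last (n + 1)) := by
  rw [mulVec_eq_mulVec_sub_add_smul_eOne hr, Pi.add_apply,
    hP _ (by simp [embedS_last α])]
  simp [eOne, Fin.last_pos.ne']

theorem Qform_eq_Qform_sub_smul_embedS_add (hQ : ∀ x, Qform n (r *ᵥ x) = Qform n x)
    (hP : preservesHyperplane n r) (hr : r *ᵥ embedS n α = eOne n) (v : Fin (n + 2) → ℝ) :
    Qform n v = Qform n (v - v (Fin.last (n + 1)) • embedS n α) +
      2 * v (Fin.last (n + 1)) * ((r *ᵥ v) 0 - v (Fin.last (n + 1))) := by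
  have hu : (v - v (Fin.last (n + 1)) • embedS n α) (Fin.last (n + 1)) = 0 := by
    simp [embedS_last α]
  rw [← hQ v, mulVec_eq_mulVec_sub_add_smul_eOne hr v, Qform_add_smul_eOne, hQ, hP _ hu]
  simp [eOne]

theorem omegaMin_latticeOf_gFlow_mul_lt (hQ : ∀ x, Qform n (r *ᵥ x) = Qform n x)
    (hP : preservesHyperplane n r) (hr : r *ᵥ embedS n α = eOne n) {t : ℝ} (ht : 0 ≤ t)
    {p : Fin (n + 1) → ℤ} {q : ℕ} (hq : 0 < q) (hpq : ratPt n p q ∈ unitSphere n)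
    (hdist : ∑ i, ((p i : ℝ) - q * α i) ^ 2 < (2 * q * Real.exp (-t)) ^ 2) :
    omegaMin n (latticeOf n (gFlow n t * r)) < 2 * q * Real.exp (-t) := by
  set E := ∑ i, ((p i : ℝ) - q * α i) ^ 2
  have hqR : (0 : ℝ) < q := Nat.cast_pos.2 hq
  have hv := vecPQ_mem_Lambda0 hq hpq
  have hv_last : vecPQ n p q (Fin.last (n + 1)) = q := Fin.snoc_last _ _
  have hrv_zero : (r *ᵥ vecPQ n p q) 0 = q - E / (2 * q) := by
    have h := Qform_eq_Qform_sub_smul_embedS_add hQ hP hr (vecPQ n p q)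
    rw [hv.2, hv_last, Qform_vecPQ_sub_smul_embedS] at h
    field_simp
    linarith
  set w := gFlow n t *ᵥ (r *ᵥ vecPQ n p q) with hw
  have hw_mem : w ∈ latticeOf n (gFlow n t * r) := ⟨_, hv, (mulVec_mulVec _ _ _).symm⟩
  have hw_cone : Qform n w = 0 := by rw [Qform_gFlow_mulVec, hQ, hv.2]
  have hw_last : w (Fin.last (n + 1)) = q * Real.exp (-t) + Real.sinh t * (E / (2 * q)) := by
    rw [hw, gFlow_mulVec_last, hrv_zero, mulVec_last_of_preservesHyperplane hP hr, hv_last,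
      ← Real.cosh_sub_sinh]
    ring
  have hE : 0 ≤ E := Finset.sum_nonneg fun i _ => sq_nonneg _
  have hsinh : 0 ≤ Real.sinh t := Real.sinh_nonneg_iff.2 ht
  have hdrift : Real.sinh t * (E / (2 * q)) < q * Real.exp (-t) := by
    have hsinh_le : Real.sinh t ≤ Real.exp t / 2 := by
      rw [Real.sinh_eq]; linarith [Real.exp_pos (-t)]
    calc Real.sinh t * (E / (2 * q))
        ≤ Real.exp t / 2 * (E / (2 * q)) := by gcongr
      _ < Real.exp t / 2 * ((2 * q * Real.exp (-t)) ^ 2 / (2 * q)) := by gcongr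
      _ = q * Real.exp (-t) := by
        rw [Real.exp_neg]; field_simp
  have hw_pos : 0 < w (Fin.last (n + 1)) := by rw [hw_last]; positivity
  calc omegaMin n (latticeOf n (gFlow n t * r))
      ≤ ‖w‖ := omegaMin_le_norm hw_mem fun h => hw_pos.ne' (by simp [h])
    _ = w (Fin.last (n + 1)) := by
      rw [norm_eq_abs_last_of_Qform_eq_zero hw_cone, abs_of_pos hw_pos]
    _ < 2 * q * Real.exp (-t) := by linarith

theorem omegaMin_lt_of_norm_sub_ratPt_lt (hQ : ∀ x, Qform n (r *ᵥ x) = Qform n x)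
    (hP : preservesHyperplane n r) (hr : r *ᵥ embedS n α = eOne n)
    {p : Fin (n + 1) → ℤ} {q : ℕ} (hq : 0 < q) (hpq : ratPt n p q ∈ unitSphere n) {ε : ℝ}
    (hε : ‖α - ratPt n p q‖ < ε) (hε_le : Real.sqrt ((n : ℝ) + 1) * ε ≤ 2) :
    omegaMin n (latticeOf n (gFlow n (Real.log (2 / (Real.sqrt ((n : ℝ) + 1) * ε))) * r)) <
      Real.sqrt ((n : ℝ) + 1) * q * ε := by
  set c := Real.sqrt ((n : ℝ) + 1)
  have hc : 0 < c := Real.sqrt_pos.2 (by positivity)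
  have hε0 : 0 < ε := (norm_nonneg _).trans_lt hε
  have hexp : Real.exp (-Real.log (2 / (c * ε))) = c * ε / 2 := by
    rw [Real.exp_neg, Real.exp_log (by positivity), inv_div]
  have ht : 0 ≤ Real.log (2 / (c * ε)) := Real.log_nonneg ((one_le_div (by positivity)).2 hε_le)
  convert omegaMin_latticeOf_gFlow_mul_lt hQ hP hr ht hq hpq ?_ using 1
  · rw [hexp]; ring
  · calc ∑ i, ((p i : ℝ) - q * α i) ^ 2
        < ∑ _i : Fin (n + 1), ((q : ℝ) * ε) ^ 2 :=
          Finset.sum_lt_sum_of_nonempty Finset.univ_nonempty fun i _ => by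
            obtain ⟨hlo, hhi⟩ := abs_lt.1 (abs_sub_mul_lt_of_norm_sub_ratPt_lt hq hε i)
            exact sq_lt_sq' hlo hhi
      _ = (2 * q * Real.exp (-Real.log (2 / (c * ε)))) ^ 2 := by
        rw [hexp, Finset.sum_const, Finset.card_univ, Fintype.card_fin, nsmul_eq_mul]
        field_simp
        rw [Real.sq_sqrt (by positivity)]
        push_cast; ring

end LightConeChart

theorem tendsto_log_div_const_mul_atTop {ι : Type*} {l : Filter ι} {f : ι → ℝ} {a c : ℝ}
    (ha : 0 < a) (hc : 0 < c) (hf : Tendsto f l (𝓝[>] 0)) :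
    Tendsto (fun i => Real.log (a / (c * f i))) l atTop := by
  refine Real.tendsto_log_atTop.comp
    (((tendsto_inv_nhdsGT_zero.comp hf).const_mul_atTop (div_pos ha hc)).congr fun i => ?_)
  simp only [Function.comp_apply]
  rw [div_mul_eq_div_div, div_eq_mul_inv (a / c)]

theorem approximable_implies_small_lattice_vectors_general (n : ℕ)
    (x₀ : ℝ) (φ ψ : ℝ → ℝ)
    (hφpos : ∀ x ∈ Set.Ici x₀, 0 < φ x)
    (hφanti : StrictAntiOn φ (Set.Ici x₀))
    (hφlim : Filter.Tendsto φ Filter.atTop (nhds 0))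
    -- `ψ = φ⁻¹` is the inverse function of `φ`, defined on `(0, φ(x₀)]`
    (hψφ : ∀ x ∈ Set.Ici x₀, ψ (φ x) = x)
    (α : Fin (n + 1) → ℝ)
    (rα : Matrix (Fin (n + 2)) (Fin (n + 2)) ℝ) (hrG : isSOQ n rα)
    (hrP : preservesHyperplane n rα) (hrα : rα.mulVec (embedS n α) = eOne n)
    (happrox : {pq : (Fin (n + 1) → ℤ) × ℕ | 0 < pq.2 ∧ x₀ ≤ (pq.2 : ℝ) ∧
      ratPt n pq.1 pq.2 ∈ unitSphere n ∧
      ‖α - ratPt n pq.1 pq.2‖ < φ (pq.2 : ℝ)}.Infinite) :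
    ∃ ts : ℕ → ℝ,
      (∀ k, Real.log (2 / (Real.sqrt ((n : ℝ) + 1) * φ x₀)) ≤ ts k) ∧
      Filter.Tendsto ts Filter.atTop Filter.atTop ∧
      ∀ k, omegaMin n (latticeOf n (gFlow n (ts k) * rα)) <
        2 * (Real.exp (-(ts k)) *
          ψ (2 / (Real.sqrt ((n : ℝ) + 1) * Real.exp (ts k)))) := by
  set c := Real.sqrt ((n : ℝ) + 1)
  have hc : 0 < c := Real.sqrt_pos.2 (by positivity)
  obtain ⟨M, hM⟩ : ∃ M, ∀ x ≥ M, c * φ x ≤ 2 := eventually_atTop.1 <|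
    (hφlim.const_mul c).eventually (ge_mem_nhds (by simp))
  choose pq hpqS hpq_gt using fun k : ℕ =>
    happrox.exists_lt_snd_of_ratPt_mem_unitSphere (fun _ h => ⟨h.1, h.2.2.1⟩) (max k ⌈M⌉₊)
  have hq_ge : ∀ k : ℕ, (k : ℝ) ≤ (pq k).2 ∧ M ≤ (pq k).2 := fun k => by
    obtain ⟨hk, hM⟩ := max_lt_iff.1 (hpq_gt k)
    exact ⟨by exact_mod_cast hk.le, (Nat.le_ceil M).trans (by exact_mod_cast hM.le)⟩
  refine ⟨fun k => Real.log (2 / (c * φ (pq k).2)), fun k => ?_, ?_, fun k => ?_⟩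
  · have hqx := (hpqS k).2.1
    have hφq := hφpos _ hqx
    have hφx₀ := hφpos _ Set.self_mem_Ici
    dsimp only
    gcongr
    exact hφanti.antitoneOn Set.self_mem_Ici hqx hqx
  · have hq_tendsto : Tendsto (fun k => ((pq k).2 : ℝ)) atTop atTop :=
      tendsto_atTop_mono (fun k => (hq_ge k).1) tendsto_natCast_atTop_atTop
    exact tendsto_log_div_const_mul_atTop two_pos hc (tendsto_nhdsWithin_iff.2
      ⟨hφlim.comp hq_tendsto, Eventually.of_forall fun k => hφpos _ (hpqS k).2.1⟩)
  · obtain ⟨hq, hqx, hpq, happ⟩ := hpqS k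
    have hφq := hφpos _ hqx
    dsimp only
    rw [Real.exp_neg, Real.exp_log (by positivity),
      show 2 / (c * (2 / (c * φ (pq k).2))) = φ (pq k).2 by field_simp, hψφ _ hqx]
    refine (omegaMin_lt_of_norm_sub_ratPt_lt hrG.2 hrP hrα hq hpq happ (hM _ (hq_ge k).2)).trans_eq
      (show c * (pq k).2 * φ (pq k).2 = _ by field_simp)

/-- One direction of the correspondence (Theorem `dictionary`): if `α ∈ Sⁿ` is
`φ`-approximable in `Sⁿ` (with denominators `q ≥ x₀`), then there is a sequence
`t_k → ∞` in `[t₀,∞)` with `ω(g_{t_k} r_α Λ₀) < 2ρ(t_k)`, where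
`t₀ = ln(2/(√(n+1)φ(x₀)))` and `ρ(t) = e^{−t} φ⁻¹(2/(√(n+1)e^t))`. -/
theorem approximable_implies_small_lattice_vectors (n : ℕ) (hn : 1 ≤ n)
    (x₀ : ℝ) (hx₀ : 1 ≤ x₀) (φ ψ : ℝ → ℝ)
    (hφpos : ∀ x ∈ Set.Ici x₀, 0 < φ x)
    (hφanti : StrictAntiOn φ (Set.Ici x₀))
    (hφcont : ContinuousOn φ (Set.Ici x₀))
    (hφlim : Filter.Tendsto φ Filter.atTop (nhds 0))
    (hxφ : ∀ x y : ℝ, x₀ ≤ x → x ≤ y → y * φ y ≤ x * φ x)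
    -- `ψ = φ⁻¹` is the inverse function of `φ`, defined on `(0, φ(x₀)]`
    (hψmem : ∀ y ∈ Set.Ioc (0 : ℝ) (φ x₀), ψ y ∈ Set.Ici x₀ ∧ φ (ψ y) = y)
    (hψφ : ∀ x ∈ Set.Ici x₀, ψ (φ x) = x)
    (α : Fin (n + 1) → ℝ) (hα : α ∈ unitSphere n)
    (rα : Matrix (Fin (n + 2)) (Fin (n + 2)) ℝ) (hrG : isSOQ n rα)
    (hrP : preservesHyperplane n rα) (hrα : rα.mulVec (embedS n α) = eOne n)
    (happrox : {pq : (Fin (n + 1) → ℤ) × ℕ | 0 < pq.2 ∧ x₀ ≤ (pq.2 : ℝ) ∧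
      ratPt n pq.1 pq.2 ∈ unitSphere n ∧
      ‖α - ratPt n pq.1 pq.2‖ < φ (pq.2 : ℝ)}.Infinite) :
    ∃ ts : ℕ → ℝ,
      (∀ k, Real.log (2 / (Real.sqrt ((n : ℝ) + 1) * φ x₀)) ≤ ts k) ∧
      Filter.Tendsto ts Filter.atTop Filter.atTop ∧
      ∀ k, omegaMin n (latticeOf n (gFlow n (ts k) * rα)) <
        2 * (Real.exp (-(ts k)) *
          ψ (2 / (Real.sqrt ((n : ℝ) + 1) * Real.exp (ts k)))) :=
  approximable_implies_small_lattice_vectors_general n x₀ φ ψ hφpos hφanti hφlim hψφ α rα hrG hrP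
    hrα happrox
end

section
/- Let x₀, φ, t₀, ρ be as in the context. Then ρ is non-increasing on [t₀,∞). -/
/-!
Substituting `y = 2 / (√(n+1) eᵗ)` gives `ρ(t) = (√(n+1)/2) · y · φ⁻¹(y)`,
and `y · φ⁻¹(y) = x φ(x)` for `x = φ⁻¹(y)`. As `t` grows, `y` decreases, so `x` increases
(`φ` is decreasing), and `x φ(x)` does not increase.
-/

open Set Real

theorem StrictAntiOn.antitoneOn_of_rightInvOn {α β : Type*} [LinearOrder α] [Preorder β]
    {f : α → β} {g : β → α} {s : Set α} {t : Set β} (hf : StrictAntiOn f s)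
    (hg : MapsTo g t s) (hfg : RightInvOn g f t) : AntitoneOn g t := by
  intro a ha b hb hab
  rw [← hf.le_iff_ge (hg ha) (hg hb), hfg ha, hfg hb]
  exact hab

theorem monotoneOn_mul_of_rightInvOn {α : Type*} [CommMagma α] [Preorder α]
    {f g : α → α} {s t : Set α} (hg : AntitoneOn g t)
    (hgs : MapsTo g t s) (hfg : RightInvOn g f t)
    (hf : AntitoneOn (fun x => x * f x) s) : MonotoneOn (fun y => y * g y) t := by
  intro a ha b hb hab
  have : g a * f (g a) ≤ g b * f (g b) := hf (hgs hb) (hgs ha) (hg ha hb hab)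
  rw [hfg ha, hfg hb] at this
  change a * g a ≤ b * g b
  rwa [mul_comm a, mul_comm b]

theorem mapsTo_div_exp_Ici_log {k m : ℝ} (hk : 0 < k) (hm : 0 < m) :
    MapsTo (fun t => k / exp t) (Ici (log (k / m))) (Ioc 0 m) := by
  intro t ht
  exact ⟨by positivity,
    (div_le_comm₀ (exp_pos t) hm).2 ((log_le_iff_le_exp (div_pos hk hm)).1 ht)⟩

theorem rho_antitone_general (n : ℕ)
    (x₀ : ℝ) (φ ψ : ℝ → ℝ)
    (hφpos : ∀ x ∈ Set.Ici x₀, 0 < φ x)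
    (hφanti : StrictAntiOn φ (Set.Ici x₀))
    (hxφ : ∀ x y : ℝ, x₀ ≤ x → x ≤ y → y * φ y ≤ x * φ x)
    -- `ψ = φ⁻¹` is the inverse function of `φ`, defined on `(0, φ(x₀)]`
    (hψmem : ∀ y ∈ Set.Ioc (0 : ℝ) (φ x₀), ψ y ∈ Set.Ici x₀ ∧ φ (ψ y) = y) :
    AntitoneOn (fun t : ℝ => Real.exp (-t) * ψ (2 / (Real.sqrt ((n : ℝ) + 1) * Real.exp t)))
      (Set.Ici (Real.log (2 / (Real.sqrt ((n : ℝ) + 1) * φ x₀)))) := by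
  simp only [div_mul_eq_div_div]
  set k := 2 / √((n : ℝ) + 1)
  have hk : 0 < k := by positivity
  have hψmaps : MapsTo ψ (Ioc 0 (φ x₀)) (Ici x₀) := fun y hy => (hψmem y hy).1
  have hψinv : RightInvOn ψ φ (Ioc 0 (φ x₀)) := fun y hy => (hψmem y hy).2
  have hmono : MonotoneOn (fun y => y * ψ y) (Ioc 0 (φ x₀)) :=
    monotoneOn_mul_of_rightInvOn (hφanti.antitoneOn_of_rightInvOn hψmaps hψinv) hψmaps hψinv
      fun a ha b _ hab => hxφ a b ha hab
  have hy := mapsTo_div_exp_Ici_log hk (hφpos x₀ self_mem_Ici)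
  have hρ : ∀ t, exp (-t) * ψ (k / exp t) = k⁻¹ * (k / exp t * ψ (k / exp t)) := fun t => by
    rw [exp_neg]; field_simp
  intro s hs t ht hst
  simp only [hρ]
  gcongr k⁻¹ * ?_
  exact hmono (hy ht) (hy hs) (div_le_div_of_nonneg_left hk.le (exp_pos s) (exp_le_exp.mpr hst))

/-- The function `ρ(t) = e^{−t}·φ⁻¹(2/(√(n+1)e^t))` associated to `φ` is non-increasing
on `[t₀,∞)`, where `t₀ = ln(2/(√(n+1)φ(x₀)))`. -/
theorem rho_antitone (n : ℕ) (hn : 1 ≤ n)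
    (x₀ : ℝ) (hx₀ : 1 ≤ x₀) (φ ψ : ℝ → ℝ)
    (hφpos : ∀ x ∈ Set.Ici x₀, 0 < φ x)
    (hφanti : StrictAntiOn φ (Set.Ici x₀))
    (hφcont : ContinuousOn φ (Set.Ici x₀))
    (hφlim : Filter.Tendsto φ Filter.atTop (nhds 0))
    (hxφ : ∀ x y : ℝ, x₀ ≤ x → x ≤ y → y * φ y ≤ x * φ x)
    -- `ψ = φ⁻¹` is the inverse function of `φ`, defined on `(0, φ(x₀)]`
    (hψmem : ∀ y ∈ Set.Ioc (0 : ℝ) (φ x₀), ψ y ∈ Set.Ici x₀ ∧ φ (ψ y) = y)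
    (hψφ : ∀ x ∈ Set.Ici x₀, ψ (φ x) = x) :
    AntitoneOn (fun t : ℝ => Real.exp (-t) * ψ (2 / (Real.sqrt ((n : ℝ) + 1) * Real.exp t)))
      (Set.Ici (Real.log (2 / (Real.sqrt ((n : ℝ) + 1) * φ x₀)))) :=
  rho_antitone_general n x₀ φ ψ hφpos hφanti hxφ hψmem
end

section
/- Let n ≥ 1 be an integer, x₀ ≥ 1, and let φ : [x₀,∞) → (0,∞) be continuously differentiable, strictly decreasing, with φ(x) → 0 as x → ∞ and with x ↦ xφ(x) non-increasing. Set t₀ := ln(2/(√(n+1)φ(x₀))) and ρ(t) := e^{−t}·φ⁻¹(2/(√(n+1)e^t)) for t ≥ t₀. Then ∫_{t₀}^∞ ρ(t)^n dt < ∞ if and only if ∫_{x₀}^∞ x^{n−1} φ(x)^n dx < ∞. -/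
/-!
The substitution `t = log (2 / (√(n+1) φ x))` turns `ρ t` into `(√(n+1) / 2) x φ x` and `dt` into
`-φ' x / φ x dx`, so up to a constant factor the `ρ`-integral is `∫ x^n φ^(n-1) (-φ')`. Its
integrand differs from `x^(n-1) φ^n` by `-((x φ x)^n / n)'`, which is nonnegative with finite
integral because `(x φ x)^n` is non-increasing and nonnegative.
-/

open MeasureTheory Set Filter Topology

theorem AntitoneOn.exists_tendsto_atTop_of_bddBelow {α β : Type*} [LinearOrder α]
    [ConditionallyCompleteLinearOrder β] [TopologicalSpace β] [OrderTopology β]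
    {f : α → β} {a : α} (hf : AntitoneOn f (Ici a)) (hbdd : BddBelow (f '' Ici a)) :
    ∃ l, Tendsto f atTop (𝓝 l) := by
  have hanti : Antitone fun x => f (max a x) := fun x y hxy =>
    hf (le_max_left a x) (le_max_left a y) (max_le_max_left a hxy)
  have hrange : BddBelow (range fun x => f (max a x)) :=
    hbdd.mono (range_subset_iff.2 fun x => mem_image_of_mem f (le_max_left a x))
  refine ⟨_, (tendsto_atTop_ciInf hanti hrange).congr' ?_⟩
  filter_upwards [eventually_ge_atTop a] with x hx
  rw [max_eq_right hx]

theorem lintegral_ofReal_const_mul_ne_top_iff {α : Type*} [MeasurableSpace α] {μ : Measure α}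
    {k : ℝ} (hk : 0 < k) (g : α → ℝ) :
    ∫⁻ x, ENNReal.ofReal (k * g x) ∂μ ≠ ⊤ ↔ ∫⁻ x, ENNReal.ofReal (g x) ∂μ ≠ ⊤ := by
  simp_rw [ENNReal.ofReal_mul hk.le]
  rw [lintegral_const_mul' _ _ ENNReal.ofReal_ne_top, Ne, ENNReal.mul_eq_top]
  simp [hk]

theorem lintegral_Ici_eq_lintegral_deriv_mul_comp {T T' : ℝ → ℝ} {a : ℝ}
    (hT : ∀ x ∈ Ici a, HasDerivWithinAt T (T' x) (Ici a) x) (hmono : MonotoneOn T (Ici a))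
    (htop : Tendsto T atTop atTop) (f : ℝ → ENNReal) :
    ∫⁻ t in Ici (T a), f t = ∫⁻ x in Ici a, ENNReal.ofReal (T' x) * f (T x) := by
  have himage : T '' Ici a = Ici (T a) :=
    (image_subset_iff.2 fun x hx => hmono self_mem_Ici hx hx).antisymm
      (intermediate_value_Ici (fun x hx => (hT x hx).continuousWithinAt) htop)
  rw [← himage]
  exact lintegral_image_eq_lintegral_deriv_mul_of_monotoneOn measurableSet_Ici hT hmono f

theorem lintegral_Ici_log_div_eq {φ φ' : ℝ → ℝ} {x₀ c : ℝ} (hc : 0 < c)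
    (hφpos : ∀ x ∈ Ici x₀, 0 < φ x) (hφanti : AntitoneOn φ (Ici x₀))
    (hφ : ∀ x ∈ Ici x₀, HasDerivWithinAt φ (φ' x) (Ici x₀) x)
    (hφlim : Tendsto φ atTop (𝓝 0)) (f : ℝ → ENNReal) :
    ∫⁻ t in Ici (Real.log (c / φ x₀)), f t =
      ∫⁻ x in Ici x₀, ENNReal.ofReal (-(φ' x / φ x)) * f (Real.log (c / φ x)) := by
  have hderiv : ∀ x ∈ Ici x₀,
      HasDerivWithinAt (fun y => Real.log (c / φ y)) (-(φ' x / φ x)) (Ici x₀) x := fun x hx =>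
    ((hφ x hx).log (hφpos x hx).ne').const_sub (Real.log c) |>.congr_of_mem
      (fun y hy => Real.log_div hc.ne' (hφpos y hy).ne') hx
  have hmono : MonotoneOn (fun y => Real.log (c / φ y)) (Ici x₀) := fun x hx y hy hxy =>
    Real.log_le_log (div_pos hc (hφpos x hx))
      (div_le_div_of_nonneg_left hc.le (hφpos y hy) (hφanti hx hy hxy))
  have hφ0 : Tendsto φ atTop (𝓝[>] 0) :=
    tendsto_nhdsWithin_iff.2 ⟨hφlim, eventually_atTop.2 ⟨x₀, fun x hx => hφpos x hx⟩⟩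
  have htop : Tendsto (fun y => Real.log (c / φ y)) atTop atTop :=
    Real.tendsto_log_atTop.comp ((tendsto_inv_nhdsGT_zero.comp hφ0).const_mul_atTop hc)
  exact lintegral_Ici_eq_lintegral_deriv_mul_comp hderiv hmono htop f

theorem lintegral_rho_pow_eq {φ ψ : ℝ → ℝ} {x₀ s : ℝ} (m : ℕ) (hs : 0 < s)
    (hφpos : ∀ x ∈ Ici x₀, 0 < φ x) (hφanti : AntitoneOn φ (Ici x₀))
    (hφ : DifferentiableOn ℝ φ (Ici x₀)) (hφlim : Tendsto φ atTop (𝓝 0))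
    (hψφ : ∀ x ∈ Ici x₀, ψ (φ x) = x) :
    ∫⁻ t in Ici (Real.log (2 / (s * φ x₀))),
        ENNReal.ofReal ((Real.exp (-t) * ψ (2 / (s * Real.exp t))) ^ (m + 1)) =
      ∫⁻ x in Ici x₀, ENNReal.ofReal
        ((s / 2) ^ (m + 1) * (x ^ (m + 1) * φ x ^ m * -derivWithin φ (Ici x₀) x)) := by
  have hc : 0 < 2 / s := by positivity
  rw [← div_div, lintegral_Ici_log_div_eq hc hφpos hφanti
    (fun x hx => (hφ x hx).hasDerivWithinAt) hφlim]
  refine setLIntegral_congr_fun measurableSet_Ici fun x hx => ?_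
  have hφx := hφpos x hx
  have hφ'_div : derivWithin φ (Ici x₀) x / φ x ≤ 0 :=
    div_nonpos_of_nonpos_of_nonneg hφanti.derivWithin_nonpos hφx.le
  have harg : 2 / (s * (2 / s / φ x)) = φ x := by field_simp
  rw [Real.exp_neg, Real.exp_log (div_pos hc hφx), harg, hψφ x hx,
    ← ENNReal.ofReal_mul (neg_nonneg.2 hφ'_div), inv_div]
  congr 1
  field_simp
  ring

theorem lintegral_Ici_ofReal_ne_top_iff_of_hasDerivAt_sub {f g F : ℝ → ℝ} {a : ℝ}
    (hf : AEMeasurable f (volume.restrict (Ioi a))) (hf0 : ∀ x ∈ Ioi a, 0 ≤ f x)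
    (hFa : ContinuousWithinAt F (Ici a) a) (hF : ∀ x ∈ Ioi a, HasDerivAt F (f x - g x) x)
    (hFanti : AntitoneOn F (Ici a)) (hFbdd : BddBelow (F '' Ici a)) :
    ∫⁻ x in Ici a, ENNReal.ofReal (g x) ≠ ⊤ ↔ ∫⁻ x in Ici a, ENNReal.ofReal (f x) ≠ ⊤ := by
  have hF'_nonpos : ∀ x ∈ Ioi a, f x - g x ≤ 0 := fun x hx => by
    rw [← (hF x hx).hasDerivWithinAt.derivWithin (uniqueDiffOn_Ici a x (mem_Ici_of_Ioi hx))]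
    exact hFanti.derivWithin_nonpos
  obtain ⟨l, hl⟩ := hFanti.exists_tendsto_atTop_of_bddBelow hFbdd
  have hint : IntegrableOn (fun x => -(f x - g x)) (Ioi a) :=
    (integrableOn_Ioi_deriv_of_nonpos hFa hF hF'_nonpos hl).neg
  have hsplit : ∫⁻ x in Ioi a, ENNReal.ofReal (g x) =
      (∫⁻ x in Ioi a, ENNReal.ofReal (f x)) + ∫⁻ x in Ioi a, ENNReal.ofReal (-(f x - g x)) := by
    rw [← lintegral_add_left' hf.ennreal_ofReal fun x => ENNReal.ofReal (-(f x - g x))]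
    refine setLIntegral_congr_fun measurableSet_Ioi fun x hx => ?_
    rw [← ENNReal.ofReal_add (hf0 x hx) (neg_nonneg.2 (hF'_nonpos x hx)), neg_sub, add_sub_cancel]
  rw [← restrict_Ioi_eq_restrict_Ici, hsplit, ENNReal.add_ne_top]
  exact and_iff_left hint.lintegral_lt_top.ne

theorem lintegral_pow_mul_neg_deriv_ne_top_iff {φ φ' : ℝ → ℝ} {x₀ : ℝ} (m : ℕ) (hx₀ : 0 ≤ x₀)
    (hφ : ∀ x ∈ Ici x₀, 0 ≤ φ x) (hφcont : ContinuousOn φ (Ici x₀))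
    (hφ' : ∀ x ∈ Ioi x₀, HasDerivAt φ (φ' x) x)
    (hxφ : AntitoneOn (fun x => x * φ x) (Ici x₀)) :
    ∫⁻ x in Ici x₀, ENNReal.ofReal (x ^ (m + 1) * φ x ^ m * -φ' x) ≠ ⊤ ↔
      ∫⁻ x in Ici x₀, ENNReal.ofReal (x ^ m * φ x ^ (m + 1)) ≠ ⊤ := by
  have hxφ_nonneg : ∀ x ∈ Ici x₀, 0 ≤ x * φ x := fun x hx =>
    mul_nonneg (hx₀.trans hx) (hφ x hx)
  have hF : ∀ x ∈ Ioi x₀, HasDerivAt (fun y => (y * φ y) ^ (m + 1) / (m + 1))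
      (x ^ m * φ x ^ (m + 1) - x ^ (m + 1) * φ x ^ m * -φ' x) x := fun x hx => by
    refine ((((hasDerivAt_id' x).fun_mul (hφ' x hx)).fun_pow (m + 1)).div_const
      ((m : ℝ) + 1)).congr_deriv ?_
    rw [Nat.add_sub_cancel]
    push_cast
    field_simp
    ring
  refine lintegral_Ici_ofReal_ne_top_iff_of_hasDerivAt_sub
    (F := fun y => (y * φ y) ^ (m + 1) / (m + 1))
    ((((continuousOn_pow m).mul (hφcont.pow (m + 1))).mono Ioi_subset_Ici_self).aemeasurable
      measurableSet_Ioi)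
    (fun x hx => mul_nonneg (pow_nonneg (hx₀.trans (le_of_lt hx)) m)
      (pow_nonneg (hφ x (mem_Ici_of_Ioi hx)) _))
    ((((continuousOn_id.mul hφcont).pow (m + 1)).div_const _) x₀ self_mem_Ici) hF
    (fun x hx y hy hxy => by
      dsimp only
      gcongr ?_ ^ _ / _
      exacts [hxφ_nonneg y hy, hxφ hx hy hxy])
    ⟨0, ?_⟩
  rintro _ ⟨x, hx, rfl⟩
  have := hxφ_nonneg x hx
  positivity

theorem rho_integral_iff_phi_integral_general (n : ℕ) (hn : 1 ≤ n)
    (x₀ : ℝ) (hx₀ : 1 ≤ x₀) (φ ψ : ℝ → ℝ)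
    (hφpos : ∀ x ∈ Set.Ici x₀, 0 < φ x)
    (hφanti : StrictAntiOn φ (Set.Ici x₀))
    (hφC1 : ContDiffOn ℝ 1 φ (Set.Ici x₀))
    (hφlim : Filter.Tendsto φ Filter.atTop (nhds 0))
    (hxφ : ∀ x y : ℝ, x₀ ≤ x → x ≤ y → y * φ y ≤ x * φ x)
    -- `ψ = φ⁻¹` is the inverse function of `φ`, defined on `(0, φ(x₀)]`
    (hψφ : ∀ x ∈ Set.Ici x₀, ψ (φ x) = x) :
    (∫⁻ t in Set.Ici (Real.log (2 / (Real.sqrt ((n : ℝ) + 1) * φ x₀))),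
        ENNReal.ofReal
          ((Real.exp (-t) * ψ (2 / (Real.sqrt ((n : ℝ) + 1) * Real.exp t))) ^ n) ≠ ⊤) ↔
    (∫⁻ x in Set.Ici x₀, ENNReal.ofReal (x ^ (n - 1) * φ x ^ n) ≠ ⊤) := by
  obtain ⟨m, rfl⟩ : ∃ m, n = m + 1 := ⟨n - 1, by omega⟩
  have hφdiff := hφC1.differentiableOn one_ne_zero
  have hφ' : ∀ x ∈ Ioi x₀, HasDerivAt φ (derivWithin φ (Ici x₀) x) x := fun x hx =>
    (hφdiff x (mem_Ici_of_Ioi hx)).hasDerivWithinAt.hasDerivAt (Ici_mem_nhds hx)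
  rw [lintegral_rho_pow_eq m (by positivity) hφpos hφanti.antitoneOn hφdiff hφlim hψφ,
    lintegral_ofReal_const_mul_ne_top_iff (by positivity), Nat.add_sub_cancel]
  exact lintegral_pow_mul_neg_deriv_ne_top_iff m (by linarith) (fun x hx => (hφpos x hx).le)
    hφC1.continuousOn hφ' fun x hx y _ hxy => hxφ x y hx hxy

/-- Lemma relating the convergence of `∫ ρ(t)^n dt` on `[t₀,∞)` and of
`∫ x^{n−1} φ(x)^n dx` on `[x₀,∞)`, where `t₀ = ln(2/(√(n+1)φ(x₀)))` and
`ρ(t) = e^{−t}·φ⁻¹(2/(√(n+1)e^t))`. -/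
theorem rho_integral_iff_phi_integral (n : ℕ) (hn : 1 ≤ n)
    (x₀ : ℝ) (hx₀ : 1 ≤ x₀) (φ ψ : ℝ → ℝ)
    (hφpos : ∀ x ∈ Set.Ici x₀, 0 < φ x)
    (hφanti : StrictAntiOn φ (Set.Ici x₀))
    (hφC1 : ContDiffOn ℝ 1 φ (Set.Ici x₀))
    (hφlim : Filter.Tendsto φ Filter.atTop (nhds 0))
    (hxφ : ∀ x y : ℝ, x₀ ≤ x → x ≤ y → y * φ y ≤ x * φ x)
    -- `ψ = φ⁻¹` is the inverse function of `φ`, defined on `(0, φ(x₀)]`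
    (hψmem : ∀ y ∈ Set.Ioc (0 : ℝ) (φ x₀), ψ y ∈ Set.Ici x₀ ∧ φ (ψ y) = y)
    (hψφ : ∀ x ∈ Set.Ici x₀, ψ (φ x) = x) :
    (∫⁻ t in Set.Ici (Real.log (2 / (Real.sqrt ((n : ℝ) + 1) * φ x₀))),
        ENNReal.ofReal
          ((Real.exp (-t) * ψ (2 / (Real.sqrt ((n : ℝ) + 1) * Real.exp t))) ^ n) ≠ ⊤) ↔
    (∫⁻ x in Set.Ici x₀, ENNReal.ofReal (x ^ (n - 1) * φ x ^ n) ≠ ⊤) :=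
  rho_integral_iff_phi_integral_general n hn x₀ hx₀ φ ψ hφpos hφanti hφC1 hφlim hxφ hψφ
end

section
/- There exist an open subset W of Sⁿ containing the closed hemisphere {α ∈ Sⁿ : α₁ ≥ 0} and a map α ↦ r_α from W into G such that: each r_α preserves the subspace ℝ^{n+1}×{0}; r_α(α,1) = e₁ for every α ∈ W; and the map α ↦ r_α is bi-Lipschitz onto its image (with respect to the Euclidean metric on Sⁿ ⊂ ℝ^{n+1} and the metric on G induced by a matrix norm). -/
open MeasureTheory

/-- The supremum (entrywise) norm of a matrix, inducing the standard topology on matrices. -/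
noncomputable def matNorm {n : ℕ} (A : Matrix (Fin (n + 2)) (Fin (n + 2)) ℝ) : ℝ :=
  ‖(fun i j => A i j : Fin (n + 2) → Fin (n + 2) → ℝ)‖



namespace BLSec

/-- basis vector e₀ -/
noncomputable def bVec (n : ℕ) : Fin (n + 1) → ℝ := fun i => if i = 0 then 1 else 0

noncomputable def uVec (n : ℕ) (α : Fin (n + 1) → ℝ) : Fin (n + 1) → ℝ :=
  fun i => α i + bVec n i

/-- Rotation of ℝ^{n+1} sending α to e₀ (for α on the sphere with α 0 ≠ -1). -/
noncomputable def Rmat (n : ℕ) (α : Fin (n + 1) → ℝ) : Matrix (Fin (n + 1)) (Fin (n + 1)) ℝ :=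
  Matrix.of fun i j => (if i = j then (1 : ℝ) else 0)
    - uVec n α i * uVec n α j / (1 + α 0) + 2 * bVec n i * α j

noncomputable def rMat (n : ℕ) (α : Fin (n + 1) → ℝ) : Matrix (Fin (n + 2)) (Fin (n + 2)) ℝ :=
  Matrix.reindex (finSumFinEquiv : Fin (n + 1) ⊕ Fin 1 ≃ Fin (n + 2))
    (finSumFinEquiv : Fin (n + 1) ⊕ Fin 1 ≃ Fin (n + 2)) (Matrix.fromBlocks (Rmat n α) 0 0 1)

variable {n : ℕ}

lemma symm_castSucc (i : Fin (n + 1)) :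
    (finSumFinEquiv (n := 1)).symm i.castSucc = Sum.inl i := by
  rw [Equiv.symm_apply_eq, finSumFinEquiv_apply_left]
  rfl

lemma symm_last :
    (finSumFinEquiv (n := 1)).symm (Fin.last (n + 1)) = Sum.inr 0 := by
  rw [Equiv.symm_apply_eq, finSumFinEquiv_apply_right]
  ext
  simp

lemma rMat_cc (α : Fin (n + 1) → ℝ) (i j : Fin (n + 1)) :
    rMat n α i.castSucc j.castSucc = Rmat n α i j := by
  simp [rMat, Matrix.reindex_apply, Matrix.submatrix_apply, symm_castSucc]

lemma rMat_cl (α : Fin (n + 1) → ℝ) (i : Fin (n + 1)) :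
    rMat n α i.castSucc (Fin.last (n + 1)) = 0 := by
  simp [rMat, Matrix.reindex_apply, Matrix.submatrix_apply, symm_castSucc, symm_last]

lemma rMat_lc (α : Fin (n + 1) → ℝ) (j : Fin (n + 1)) :
    rMat n α (Fin.last (n + 1)) j.castSucc = 0 := by
  simp [rMat, Matrix.reindex_apply, Matrix.submatrix_apply, symm_castSucc, symm_last]

lemma rMat_ll (α : Fin (n + 1) → ℝ) :
    rMat n α (Fin.last (n + 1)) (Fin.last (n + 1)) = 1 := by
  simp [rMat, Matrix.reindex_apply, Matrix.submatrix_apply, symm_last]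

lemma rMat_mulVec_last (α : Fin (n + 1) → ℝ) (x : Fin (n + 2) → ℝ) :
    (rMat n α).mulVec x (Fin.last (n + 1)) = x (Fin.last (n + 1)) := by
  simp only [Matrix.mulVec, dotProduct]
  rw [Fin.sum_univ_castSucc]
  simp [rMat_lc, rMat_ll]

lemma rMat_mulVec_castSucc (α : Fin (n + 1) → ℝ) (x : Fin (n + 2) → ℝ) (i : Fin (n + 1)) :
    (rMat n α).mulVec x i.castSucc
      = (Rmat n α).mulVec (fun j => x j.castSucc) i := by
  simp only [Matrix.mulVec, dotProduct]
  rw [Fin.sum_univ_castSucc]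
  simp [rMat_cc, rMat_cl]




lemma sum_mul_bVec (y : Fin (n + 1) → ℝ) : ∑ i, y i * bVec n i = y 0 := by
  simp [bVec, mul_ite, Finset.sum_ite_eq']

lemma sum_uVec_mul (α y : Fin (n + 1) → ℝ) :
    ∑ j, uVec n α j * y j = (∑ j, α j * y j) + y 0 := by
  have : ∀ j, uVec n α j * y j = α j * y j + y j * bVec n j := by
    intro j; simp [uVec]; ring
  simp_rw [this, Finset.sum_add_distrib, sum_mul_bVec]

lemma sum_uVec_sq (α : Fin (n + 1) → ℝ) (hα : ∑ i, α i ^ 2 = 1) :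
    ∑ i, uVec n α i ^ 2 = 2 * (1 + α 0) := by
  have : ∀ i, uVec n α i ^ 2 = α i ^ 2 + 2 * (α i * bVec n i) + bVec n i * bVec n i := by
    intro i; simp [uVec]; ring
  simp_rw [this, Finset.sum_add_distrib, hα, ← Finset.mul_sum, sum_mul_bVec]
  simp [bVec]
  ring

lemma Rmat_mulVec (α : Fin (n + 1) → ℝ) (y : Fin (n + 1) → ℝ) (i : Fin (n + 1)) :
    (Rmat n α).mulVec y i
      = y i - uVec n α i * (∑ j, uVec n α j * y j) / (1 + α 0)
        + 2 * bVec n i * (∑ j, α j * y j) := by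
  simp only [Matrix.mulVec, dotProduct, Rmat, Matrix.of_apply]
  have : ∀ j, ((if i = j then (1 : ℝ) else 0)
      - uVec n α i * uVec n α j / (1 + α 0) + 2 * bVec n i * α j) * y j
      = (if i = j then y j else 0)
        + ((-(uVec n α i / (1 + α 0))) * (uVec n α j * y j)
          + (2 * bVec n i) * (α j * y j)) := by
    intro j; split_ifs <;> ring
  simp_rw [this, Finset.sum_add_distrib, Finset.sum_ite_eq, ← Finset.mul_sum]
  simp
  ring

lemma Rmat_norm_preserve (α : Fin (n + 1) → ℝ) (hα : ∑ i, α i ^ 2 = 1)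
    (h0 : (1 : ℝ) + α 0 ≠ 0) (y : Fin (n + 1) → ℝ) :
    ∑ i, ((Rmat n α).mulVec y i) ^ 2 = ∑ i, y i ^ 2 := by
  set s := ∑ j, uVec n α j * y j with hs_def
  set t := ∑ j, α j * y j with ht_def
  have hs : s = t + y 0 := sum_uVec_mul α y
  have hu0 : uVec n α 0 = 1 + α 0 := by simp [uVec, bVec]; ring
  have step1 : ∀ i, ((Rmat n α).mulVec y i) ^ 2
      = (y i - uVec n α i * s / (1 + α 0)) ^ 2
        + (if i = 0 then 4 * (y i - uVec n α i * s / (1 + α 0)) * t + 4 * t ^ 2 else 0) := by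
    intro i
    rw [Rmat_mulVec]
    by_cases hi : i = 0 <;> simp [bVec, hi] <;> ring
  rw [Finset.sum_congr rfl fun i _ => step1 i, Finset.sum_add_distrib, Finset.sum_ite_eq']
  have step2 : ∀ i, (y i - uVec n α i * s / (1 + α 0)) ^ 2
      = y i ^ 2 - (2 * (s / (1 + α 0))) * (uVec n α i * y i)
        + (s / (1 + α 0)) ^ 2 * uVec n α i ^ 2 := by
    intro i; field_simp; ring
  rw [Finset.sum_congr rfl fun i _ => step2 i]
  simp_rw [Finset.sum_add_distrib, Finset.sum_sub_distrib, ← Finset.mul_sum, ← hs_def,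
    sum_uVec_sq α hα]
  simp only [Finset.mem_univ, if_true, hu0]
  rw [hs]
  field_simp
  ring

lemma Rmat_mulVec_self (α : Fin (n + 1) → ℝ) (hα : ∑ i, α i ^ 2 = 1)
    (h0 : (1 : ℝ) + α 0 ≠ 0) :
    (Rmat n α).mulVec α = bVec n := by
  funext i
  rw [Rmat_mulVec]
  have ht : ∑ j, α j * α j = 1 := by
    rw [← hα]; exact Finset.sum_congr rfl fun j _ => (sq (α j)).symm
  have hs : ∑ j, uVec n α j * α j = 1 + α 0 := by rw [sum_uVec_mul, ht]
  rw [hs, ht]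
  have : uVec n α i * (1 + α 0) / (1 + α 0) = uVec n α i := by field_simp
  rw [this]
  simp [uVec, bVec]
  split_ifs <;> ring

lemma Rmat_det (α : Fin (n + 1) → ℝ) (hα : ∑ i, α i ^ 2 = 1)
    (h0 : (1 : ℝ) + α 0 ≠ 0) : (Rmat n α).det = 1 := by
  set C : Matrix (Fin (n + 1)) (Fin 2) ℝ :=
    Matrix.of fun i k => if k = 0 then uVec n α i else bVec n i with hC
  set D : Matrix (Fin 2) (Fin (n + 1)) ℝ :=
    Matrix.of fun k j => if k = 0 then -(uVec n α j) / (1 + α 0) else 2 * α j with hD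
  have hRm : Rmat n α = 1 + C * D := by
    funext i j
    simp only [Rmat, Matrix.of_apply, Matrix.add_apply, Matrix.mul_apply, Fin.sum_univ_two,
      hC, hD, Matrix.one_apply]
    norm_num
    split_ifs <;> ring
  rw [hRm, Matrix.det_one_add_mul_comm]
  have ht : ∑ j, α j * α j = 1 := by
    rw [← hα]; exact Finset.sum_congr rfl fun j _ => (sq (α j)).symm
  have husq : ∑ i, uVec n α i * uVec n α i = 2 * (1 + α 0) := by
    rw [← sum_uVec_sq α hα]; exact Finset.sum_congr rfl fun j _ => (sq _).symm
  have hub : ∑ i, uVec n α i * bVec n i = 1 + α 0 := by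
    rw [sum_mul_bVec]; simp [uVec, bVec]; ring
  have hαu : ∑ i, α i * uVec n α i = 1 + α 0 := by
    have : ∀ i, α i * uVec n α i = α i * α i + α i * bVec n i := by
      intro i; simp [uVec]; ring
    simp_rw [this, Finset.sum_add_distrib, ht, sum_mul_bVec]
  have hαb : ∑ i, α i * bVec n i = α 0 := sum_mul_bVec α
  rw [Matrix.det_fin_two]
  simp only [Matrix.add_apply, Matrix.mul_apply, Matrix.one_apply, hD, hC, Matrix.of_apply]
  norm_num
  have e00 : ∑ i, -(uVec n α i) / (1 + α 0) * uVec n α i = -2 := by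
    have : ∀ i, -(uVec n α i) / (1 + α 0) * uVec n α i
        = -(uVec n α i * uVec n α i) * (1 + α 0)⁻¹ := by intro i; field_simp
    simp_rw [this, ← Finset.sum_mul, Finset.sum_neg_distrib, husq]
    field_simp
  have e01 : ∑ i, -(uVec n α i) / (1 + α 0) * bVec n i = -1 := by
    have : ∀ i, -(uVec n α i) / (1 + α 0) * bVec n i
        = -(uVec n α i * bVec n i) * (1 + α 0)⁻¹ := by intro i; field_simp
    simp_rw [this, ← Finset.sum_mul, Finset.sum_neg_distrib, hub]
    field_simp
  have e10 : ∑ i, 2 * α i * uVec n α i = 2 * (1 + α 0) := by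
    have : ∀ i, 2 * α i * uVec n α i = 2 * (α i * uVec n α i) := fun i => by ring
    simp_rw [this, ← Finset.mul_sum, hαu]
  have e11 : ∑ i, 2 * α i * bVec n i = 2 * α 0 := by
    have : ∀ i, 2 * α i * bVec n i = 2 * (α i * bVec n i) := fun i => by ring
    simp_rw [this, ← Finset.mul_sum, hαb]
  rw [e00, e01, e10, e11]
  ring


lemma rMat_det (α : Fin (n + 1) → ℝ) (hα : ∑ i, α i ^ 2 = 1)
    (h0 : (1 : ℝ) + α 0 ≠ 0) : (rMat n α).det = 1 := by
  rw [rMat, Matrix.det_reindex_self, Matrix.det_fromBlocks_zero₂₁, Rmat_det α hα h0,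
    Matrix.det_one, mul_one]

lemma rMat_hyperplane (α : Fin (n + 1) → ℝ) : preservesHyperplane n (rMat n α) :=
  fun x hx => by rw [rMat_mulVec_last]; exact hx

lemma rMat_Qform (α : Fin (n + 1) → ℝ) (hα : ∑ i, α i ^ 2 = 1)
    (h0 : (1 : ℝ) + α 0 ≠ 0) (x : Fin (n + 2) → ℝ) :
    Qform n ((rMat n α).mulVec x) = Qform n x := by
  unfold Qform
  rw [rMat_mulVec_last]
  congr 1
  simp_rw [rMat_mulVec_castSucc]
  exact Rmat_norm_preserve α hα h0 _

lemma rMat_embedS (α : Fin (n + 1) → ℝ) (hα : ∑ i, α i ^ 2 = 1)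
    (h0 : (1 : ℝ) + α 0 ≠ 0) :
    (rMat n α).mulVec (embedS n α) = eOne n := by
  funext k
  induction k using Fin.lastCases with
  | last =>
    rw [rMat_mulVec_last]
    have h1 : Fin.last (n + 1) ≠ 0 := by
      simp [Fin.ext_iff]
    simp [embedS, eOne, Fin.snoc_last, h1]
  | cast i =>
    rw [rMat_mulVec_castSucc]
    have h2 : (fun j => embedS n α j.castSucc) = α := funext fun j => Fin.snoc_castSucc _ _ j
    rw [h2, Rmat_mulVec_self α hα h0]
    have h3 : i.castSucc ≠ Fin.last (n + 1) := (Fin.castSucc_lt_last i).ne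
    by_cases hi : i = 0
    · simp [bVec, eOne, hi]
    · have : i.castSucc ≠ 0 := by
        simpa [Fin.castSucc_eq_zero_iff] using hi
      simp [bVec, eOne, hi, this, h3]

lemma Rmat_row_zero (α : Fin (n + 1) → ℝ) (h0 : (1 : ℝ) + α 0 ≠ 0) (j : Fin (n + 1)) :
    Rmat n α 0 j = α j := by
  have hu0 : uVec n α 0 = 1 + α 0 := by simp [uVec, bVec]; ring
  simp only [Rmat, Matrix.of_apply, hu0]
  by_cases hj : j = 0 <;>
    simp only [uVec, bVec, hj, if_true, if_neg, eq_comm] <;>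
    field_simp <;> ring


lemma abs_le_one_of_sphere (α : Fin (n + 1) → ℝ) (hα : ∑ i, α i ^ 2 = 1) (i : Fin (n + 1)) :
    |α i| ≤ 1 := by
  have h1 : α i ^ 2 ≤ 1 := by
    rw [← hα]; exact Finset.single_le_sum (fun j _ => sq_nonneg (α j)) (Finset.mem_univ i)
  nlinarith [abs_nonneg (α i), sq_abs (α i)]

lemma abs_diff_le_L (α β : Fin (n + 1) → ℝ) (i : Fin (n + 1)) :
    |α i - β i| ≤ Real.sqrt (∑ j, (α j - β j) ^ 2) := by
  rw [← Real.sqrt_sq_eq_abs]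
  have h : (α i - β i) ^ 2 ≤ ∑ j, (α j - β j) ^ 2 :=
    Finset.single_le_sum (fun j _ => sq_nonneg ((α j - β j))) (Finset.mem_univ i)
  exact Real.sqrt_le_sqrt h

lemma mul_diff_le {a b c d L : ℝ} (ha : |a| ≤ 2) (hd : |d| ≤ 2)
    (h1 : |a - c| ≤ L) (h2 : |b - d| ≤ L) : |a * b - c * d| ≤ 4 * L := by
  have h3 : a * b - c * d = a * (b - d) + (a - c) * d := by ring
  rw [h3]
  calc |a * (b - d) + (a - c) * d| ≤ |a * (b - d)| + |(a - c) * d| := abs_add_le _ _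
    _ = |a| * |b - d| + |a - c| * |d| := by rw [abs_mul, abs_mul]
    _ ≤ 4 * L := by
        nlinarith [abs_nonneg a, abs_nonneg (b - d), abs_nonneg (a - c), abs_nonneg d]

lemma abs_uVec_le (α : Fin (n + 1) → ℝ) (hα : ∑ i, α i ^ 2 = 1) (k : Fin (n + 1)) :
    |uVec n α k| ≤ 2 := by
  have hb : |bVec n k| ≤ 1 := by
    simp only [bVec]; split_ifs <;> simp
  calc |uVec n α k| ≤ |α k| + |bVec n k| := abs_add_le _ _
    _ ≤ 2 := by have := abs_le_one_of_sphere α hα k; linarith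

lemma Rmat_entry_bound (α β : Fin (n + 1) → ℝ)
    (hα : ∑ i, α i ^ 2 = 1) (hβ : ∑ i, β i ^ 2 = 1)
    (h0α : -(1/2 : ℝ) < α 0) (h0β : -(1/2 : ℝ) < β 0) (i j : Fin (n + 1)) :
    |Rmat n α i j - Rmat n β i j| ≤ 50 * Real.sqrt (∑ k, (α k - β k) ^ 2) := by
  set L := Real.sqrt (∑ k, (α k - β k) ^ 2) with hL_def
  have hL0 : 0 ≤ L := Real.sqrt_nonneg _
  have hdα : (1 / 2 : ℝ) < 1 + α 0 := by linarith
  have hdβ : (1 / 2 : ℝ) < 1 + β 0 := by linarith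
  have hαne : (1 : ℝ) + α 0 ≠ 0 := by linarith
  have hβne : (1 : ℝ) + β 0 ≠ 0 := by linarith
  have hud : ∀ k, |uVec n α k - uVec n β k| ≤ L := by
    intro k
    have : uVec n α k - uVec n β k = α k - β k := by simp [uVec]
    rw [this]; exact abs_diff_le_L α β k
  have key : Rmat n α i j - Rmat n β i j
      = (uVec n β i * uVec n β j / (1 + β 0) - uVec n α i * uVec n α j / (1 + α 0))
        + 2 * bVec n i * (α j - β j) := by
    simp only [Rmat, Matrix.of_apply]; ring
  rw [key]
  have h1 : |uVec n β i * uVec n β j / (1 + β 0)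
      - uVec n α i * uVec n α j / (1 + α 0)| ≤ 48 * L := by
    rw [div_sub_div _ _ hβne hαne, abs_div]
    have hnum : |uVec n β i * uVec n β j * (1 + α 0)
        - (1 + β 0) * (uVec n α i * uVec n α j)| ≤ 12 * L := by
      have hsplit : uVec n β i * uVec n β j * (1 + α 0)
          - (1 + β 0) * (uVec n α i * uVec n α j)
          = (uVec n β i * uVec n β j - uVec n α i * uVec n α j) * (1 + α 0)
            + uVec n α i * uVec n α j * ((1 + α 0) - (1 + β 0)) := by ring
      rw [hsplit]
      have hA : |uVec n β i * uVec n β j - uVec n α i * uVec n α j| ≤ 4 * L := by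
        refine mul_diff_le (abs_uVec_le β hβ i) (abs_uVec_le α hα j) ?_ ?_
        · rw [abs_sub_comm]; exact hud i
        · rw [abs_sub_comm]; exact hud j
      have hdd : |(1 + α 0) - (1 + β 0)| ≤ L := by
        have : (1 + α 0) - (1 + β 0) = α 0 - β 0 := by ring
        rw [this]; exact abs_diff_le_L α β 0
      have hdabs : |1 + α 0| ≤ 2 := by
        have := abs_le_one_of_sphere α hα 0
        calc |1 + α 0| ≤ |(1 : ℝ)| + |α 0| := abs_add_le _ _
          _ ≤ 2 := by rw [abs_one]; linarith
      have huu : |uVec n α i * uVec n α j| ≤ 4 := by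
        rw [abs_mul]
        nlinarith [abs_uVec_le α hα i, abs_uVec_le α hα j, abs_nonneg (uVec n α i)]
      calc |(uVec n β i * uVec n β j - uVec n α i * uVec n α j) * (1 + α 0)
            + uVec n α i * uVec n α j * ((1 + α 0) - (1 + β 0))|
          ≤ |(uVec n β i * uVec n β j - uVec n α i * uVec n α j) * (1 + α 0)|
            + |uVec n α i * uVec n α j * ((1 + α 0) - (1 + β 0))| := abs_add_le _ _
        _ = |uVec n β i * uVec n β j - uVec n α i * uVec n α j| * |1 + α 0|
            + |uVec n α i * uVec n α j| * |(1 + α 0) - (1 + β 0)| := by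
            rw [abs_mul, abs_mul]
        _ ≤ 12 * L := by
            nlinarith [abs_nonneg (uVec n β i * uVec n β j - uVec n α i * uVec n α j),
              abs_nonneg ((1 + α 0) - (1 + β 0)),
              abs_nonneg (uVec n α i * uVec n α j), abs_nonneg (1 + α 0)]
    have hden : (1 / 4 : ℝ) < |(1 + β 0) * (1 + α 0)| := by
      rw [abs_of_pos (by nlinarith)]
      nlinarith
    rw [div_le_iff₀ (by linarith : (0 : ℝ) < |(1 + β 0) * (1 + α 0)|)]
    nlinarith
  have h2 : |2 * bVec n i * (α j - β j)| ≤ 2 * L := by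
    have hb : |bVec n i| ≤ 1 := by simp only [bVec]; split_ifs <;> simp
    rw [abs_mul, abs_mul, abs_two]
    nlinarith [abs_diff_le_L α β j, abs_nonneg (bVec n i), abs_nonneg (α j - β j)]
  calc |(uVec n β i * uVec n β j / (1 + β 0) - uVec n α i * uVec n α j / (1 + α 0))
        + 2 * bVec n i * (α j - β j)|
      ≤ |uVec n β i * uVec n β j / (1 + β 0) - uVec n α i * uVec n α j / (1 + α 0)|
        + |2 * bVec n i * (α j - β j)| := abs_add_le _ _
    _ ≤ 50 * L := by linarith

lemma rMat_entry_bound (α β : Fin (n + 1) → ℝ)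
    (hα : ∑ i, α i ^ 2 = 1) (hβ : ∑ i, β i ^ 2 = 1)
    (h0α : -(1/2 : ℝ) < α 0) (h0β : -(1/2 : ℝ) < β 0) (i j : Fin (n + 2)) :
    |rMat n α i j - rMat n β i j| ≤ 50 * Real.sqrt (∑ k, (α k - β k) ^ 2) := by
  have hL0 : 0 ≤ Real.sqrt (∑ k, (α k - β k) ^ 2) := Real.sqrt_nonneg _
  induction i using Fin.lastCases with
  | last =>
    induction j using Fin.lastCases with
    | last => rw [rMat_ll, rMat_ll]; simpa using by positivity
    | cast j => rw [rMat_lc, rMat_lc]; simpa using by positivity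
  | cast i =>
    induction j using Fin.lastCases with
    | last => rw [rMat_cl, rMat_cl]; simpa using by positivity
    | cast j => rw [rMat_cc, rMat_cc]; exact Rmat_entry_bound α β hα hβ h0α h0β i j


end BLSec

/-- There exist a relatively open subset `W` of `Sⁿ` containing the closed hemisphere
`{α ∈ Sⁿ : α₁ ≥ 0}` and a map `α ↦ r_α` into `G = SO(Q)` such that each `r_α` preserves
`ℝ^{n+1}×{0}`, satisfies `r_α(α,1) = e₁`, and the map is bi-Lipschitz onto its image
(Euclidean metric on `Sⁿ`, matrix-norm metric on `G`). -/
theorem exists_biLipschitz_section (n : ℕ) (hn : 1 ≤ n) :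
    ∃ (W : Set (Fin (n + 1) → ℝ))
      (r : (Fin (n + 1) → ℝ) → Matrix (Fin (n + 2)) (Fin (n + 2)) ℝ),
      (∃ U : Set (Fin (n + 1) → ℝ), IsOpen U ∧ W = U ∩ unitSphere n) ∧
      {α | α ∈ unitSphere n ∧ 0 ≤ α 0} ⊆ W ∧
      (∀ α ∈ W, isSOQ n (r α) ∧ preservesHyperplane n (r α) ∧
        (r α).mulVec (embedS n α) = eOne n) ∧
      ∃ K : ℝ, 1 ≤ K ∧ ∀ α ∈ W, ∀ β ∈ W,
        (1 / K) * Real.sqrt (∑ i, (α i - β i) ^ 2) ≤ matNorm (r α - r β) ∧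
        matNorm (r α - r β) ≤ K * Real.sqrt (∑ i, (α i - β i) ^ 2) := by
  classical
  refine ⟨{x | -(1/2 : ℝ) < x 0} ∩ unitSphere n, BLSec.rMat n, ?_, ?_, ?_, ?_⟩
  · exact ⟨{x | -(1/2 : ℝ) < x 0}, isOpen_lt continuous_const (continuous_apply 0), rfl⟩
  · rintro α ⟨hα, h0⟩
    exact ⟨by simp only [Set.mem_setOf_eq]; linarith, hα⟩
  · rintro α ⟨h0, hα⟩
    have hsph : ∑ i, α i ^ 2 = 1 := hα
    have h0' : -(1/2 : ℝ) < α 0 := h0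
    have hne : (1 : ℝ) + α 0 ≠ 0 := by linarith
    exact ⟨⟨BLSec.rMat_det α hsph hne, BLSec.rMat_Qform α hsph hne⟩,
      BLSec.rMat_hyperplane α, BLSec.rMat_embedS α hsph hne⟩
  · set K : ℝ := 50 * ((n : ℝ) + 1) with hK_def
    have hc1 : (1 : ℝ) ≤ (n : ℝ) + 1 := by
      have := Nat.cast_nonneg (α := ℝ) n; linarith
    have hKpos : (0 : ℝ) < K := by positivity
    refine ⟨K, by nlinarith, ?_⟩
    rintro α ⟨h0α, hα⟩ β ⟨h0β, hβ⟩
    have hsα : ∑ i, α i ^ 2 = 1 := hα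
    have hsβ : ∑ i, β i ^ 2 = 1 := hβ
    have h0α' : -(1/2 : ℝ) < α 0 := h0α
    have h0β' : -(1/2 : ℝ) < β 0 := h0β
    have hneα : (1 : ℝ) + α 0 ≠ 0 := by linarith
    have hneβ : (1 : ℝ) + β 0 ≠ 0 := by linarith
    set L := Real.sqrt (∑ i, (α i - β i) ^ 2) with hL_def
    have hL0 : 0 ≤ L := Real.sqrt_nonneg _
    set M := matNorm (BLSec.rMat n α - BLSec.rMat n β) with hM_def
    -- entries of the difference
    have hsub : ∀ i j, (BLSec.rMat n α - BLSec.rMat n β) i j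
        = BLSec.rMat n α i j - BLSec.rMat n β i j := fun i j => rfl
    -- lower bound: row 0 of the block is α resp. β
    have hrow : ∀ j : Fin (n + 1),
        (BLSec.rMat n α - BLSec.rMat n β) (0 : Fin (n + 2)) j.castSucc = α j - β j := by
      intro j
      have h0c : ((0 : Fin (n + 1)).castSucc : Fin (n + 2)) = 0 := Fin.castSucc_zero
      rw [hsub, ← h0c, BLSec.rMat_cc, BLSec.rMat_cc, BLSec.Rmat_row_zero α hneα,
        BLSec.Rmat_row_zero β hneβ]
    have hMj : ∀ j : Fin (n + 1), |α j - β j| ≤ M := by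
      intro j
      have b1 := norm_le_pi_norm
        (fun i j => (BLSec.rMat n α - BLSec.rMat n β) i j) (0 : Fin (n + 2))
      have b2 := norm_le_pi_norm
        (fun j' => (BLSec.rMat n α - BLSec.rMat n β) (0 : Fin (n + 2)) j') j.castSucc
      rw [Real.norm_eq_abs] at b2
      rw [hrow j] at b2
      exact b2.trans (by exact b1)
    have hM0 : 0 ≤ M := (abs_nonneg _).trans (hMj 0)
    have hL2 : L ^ 2 ≤ ((n : ℝ) + 1) * M ^ 2 := by
      rw [hL_def, Real.sq_sqrt (Finset.sum_nonneg fun i _ => sq_nonneg _)]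
      calc ∑ i, (α i - β i) ^ 2 ≤ ∑ _i : Fin (n + 1), M ^ 2 := by
            refine Finset.sum_le_sum fun i _ => ?_
            have := hMj i
            nlinarith [sq_abs (α i - β i), abs_nonneg (α i - β i)]
        _ = ((n : ℝ) + 1) * M ^ 2 := by
            rw [Finset.sum_const, Finset.card_univ, Fintype.card_fin, nsmul_eq_mul]
            push_cast; ring
    have hLM : L ≤ ((n : ℝ) + 1) * M := by
      have h3 : L ^ 2 ≤ (((n : ℝ) + 1) * M) ^ 2 := by nlinarith [sq_nonneg M]
      have h4 : 0 ≤ ((n : ℝ) + 1) * M := mul_nonneg (by linarith) hM0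
      exact (pow_le_pow_iff_left₀ hL0 h4 two_ne_zero).mp h3
    constructor
    · -- lower Lipschitz bound
      rw [one_div, inv_mul_le_iff₀ hKpos]
      nlinarith
    · -- upper Lipschitz bound
      have hKL : 0 ≤ K * L := by positivity
      rw [hM_def, matNorm]
      rw [pi_norm_le_iff_of_nonneg hKL]
      intro i
      rw [pi_norm_le_iff_of_nonneg hKL]
      intro j
      rw [Real.norm_eq_abs, hsub]
      have := BLSec.rMat_entry_bound α β hsα hsβ h0α' h0β' i j
      rw [← hL_def] at this
      calc |BLSec.rMat n α i j - BLSec.rMat n β i j| ≤ 50 * L := this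
        _ ≤ K * L := by nlinarith
end

section
/- Suppose there exists c > 0 such that the number of rational points p/q ∈ Sⁿ with q ≤ N is at most c·Nⁿ for every N ≥ 1. If φ : ℕ → (0,∞) is non-increasing and ∑_{k=1}^∞ k^{n−1} φ(k)^n < ∞, then λ(A(φ,Sⁿ)) = 0. -/
open MeasureTheory

/-- `A(φ,Sⁿ)`: the set of points of `Sⁿ` which are `φ`-approximable in `Sⁿ`. -/
noncomputable def approxSet (n : ℕ) (φ : ℕ → ℝ) : Set (Fin (n + 1) → ℝ) :=
  {α | α ∈ unitSphere n ∧
    {pq : (Fin (n + 1) → ℤ) × ℕ | 0 < pq.2 ∧ ratPt n pq.1 pq.2 ∈ unitSphere n ∧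
      ‖α - ratPt n pq.1 pq.2‖ < φ pq.2}.Infinite}

/-- The set of rational points of `Sⁿ` with (some) positive denominator at most `N`. -/
noncomputable def ratPtsUpTo (n : ℕ) (N : ℝ) : Set (Fin (n + 1) → ℝ) :=
  {x | x ∈ unitSphere n ∧ ∃ (p : Fin (n + 1) → ℤ) (q : ℕ), 0 < q ∧ (q : ℝ) ≤ N ∧
    x = ratPt n p q}

/-! A point approximated by `p/q` with `2^k ≤ q < 2^(k+1)` lies within `φ(2^k)` of one of the
at most `c·2^((k+1)n)` rational points of `Sⁿ` with denominator at most `2^(k+1)`. Near a point of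
the sphere with a coordinate of size `≥ 1/(n+1)`, dropping that coordinate is bi-Lipschitz on
small caps, so a cap of radius `r` has `n`-dimensional Hausdorff measure `O(rⁿ)`. The `k`-th
dyadic cover therefore has measure `O((2^k φ(2^k))ⁿ)`, which is summable by a Cauchy condensation
argument, and the Borel–Cantelli lemma concludes. -/

open Filter Metric Set
open scoped ENNReal NNReal Topology

theorem Finset.sum_range_sum_Ico_of_monotone {M : Type*} [AddCommMonoid M] (f : ℕ → M)
    {u : ℕ → ℕ} (hu : Monotone u) (K : ℕ) :
    ∑ k ∈ range K, ∑ m ∈ Ico (u k) (u (k + 1)), f m = ∑ m ∈ Ico (u 0) (u K), f m := by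
  induction K with
  | zero => simp
  | succ K ih =>
    rw [sum_range_succ, ih, sum_Ico_consecutive _ (hu K.zero_le) (hu K.le_succ)]

section Condensation

variable {n : ℕ} {φ : ℕ → ℝ}

theorem two_pow_succ_mul_pow_le_sum_Ico (hφ0 : ∀ k, 0 ≤ φ k) (hφ : Antitone φ) (k : ℕ) :
    ((2 : ℝ) ^ (k + 1) * φ (2 ^ (k + 1))) ^ n ≤
      2 ^ n * ∑ m ∈ Finset.Ico (2 ^ k : ℕ) (2 ^ (k + 1)),
        ((m : ℝ) + 1) ^ (n - 1) * φ (m + 1) ^ n := by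
  have hcard : (Finset.Ico (2 ^ k) (2 ^ (k + 1))).card = 2 ^ k := by
    rw [Nat.card_Ico, pow_succ]; omega
  have hterm : ∀ m ∈ Finset.Ico (2 ^ k : ℕ) (2 ^ (k + 1)),
      ((2 : ℝ) ^ k) ^ (n - 1) * φ (2 ^ (k + 1)) ^ n ≤
        ((m : ℝ) + 1) ^ (n - 1) * φ (m + 1) ^ n := by
    intro m hm
    rw [Finset.mem_Ico] at hm
    have := hφ0 (2 ^ (k + 1))
    gcongr
    · exact_mod_cast hm.1.trans m.le_succ
    · exact hφ (Nat.succ_le_of_lt hm.2)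
  have hpow : ((2 : ℝ) ^ k) ^ n ≤ 2 ^ k * ((2 : ℝ) ^ k) ^ (n - 1) := by
    rw [← pow_succ']
    exact pow_le_pow_right₀ (one_le_pow₀ one_le_two) (by omega)
  calc ((2 : ℝ) ^ (k + 1) * φ (2 ^ (k + 1))) ^ n
      = 2 ^ n * (((2 : ℝ) ^ k) ^ n * φ (2 ^ (k + 1)) ^ n) := by
        rw [pow_succ', mul_assoc, mul_pow, mul_pow]
    _ ≤ 2 ^ n * (2 ^ k * (((2 : ℝ) ^ k) ^ (n - 1) * φ (2 ^ (k + 1)) ^ n)) := by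
        gcongr 2 ^ n * ?_
        rw [← mul_assoc]
        exact mul_le_mul_of_nonneg_right hpow (pow_nonneg (hφ0 _) n)
    _ ≤ _ := by
        gcongr
        simpa [hcard] using Finset.card_nsmul_le_sum _ _ _ hterm

theorem summable_two_pow_mul_pow_of_summable (hφ0 : ∀ k, 0 ≤ φ k) (hφ : Antitone φ)
    (hsum : Summable fun k : ℕ => ((k : ℝ) + 1) ^ (n - 1) * φ (k + 1) ^ n) :
    Summable fun k : ℕ => ((2 : ℝ) ^ k * φ (2 ^ k)) ^ n := by
  set h : ℕ → ℝ := fun m => ((m : ℝ) + 1) ^ (n - 1) * φ (m + 1) ^ n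
  have hh0 : ∀ m, 0 ≤ h m := fun m => by have := hφ0 (m + 1); positivity
  refine (summable_nat_add_iff 1).1 <| summable_of_sum_range_le (c := 2 ^ n * ∑' m, h m)
    (fun k => by have := hφ0 (2 ^ (k + 1)); positivity) fun K => ?_
  calc ∑ k ∈ Finset.range K, ((2 : ℝ) ^ (k + 1) * φ (2 ^ (k + 1))) ^ n
      ≤ ∑ k ∈ Finset.range K, 2 ^ n * ∑ m ∈ Finset.Ico (2 ^ k) (2 ^ (k + 1)), h m :=
        Finset.sum_le_sum fun k _ => two_pow_succ_mul_pow_le_sum_Ico hφ0 hφ k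
    _ = 2 ^ n * ∑ m ∈ Finset.Ico (2 ^ 0) (2 ^ K), h m := by
        rw [← Finset.mul_sum,
          Finset.sum_range_sum_Ico_of_monotone h (pow_right_mono₀ one_le_two)]
    _ ≤ 2 ^ n * ∑' m, h m := by
        gcongr
        exact hsum.sum_le_tsum _ fun m _ => hh0 m

theorem tendsto_zero_of_summable_pow_mul_pow (hn : n ≠ 0) (hφ0 : ∀ k, 0 ≤ φ k)
    (hφ : Antitone φ)
    (hsum : Summable fun k : ℕ => ((k : ℝ) + 1) ^ (n - 1) * φ (k + 1) ^ n) :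
    Tendsto φ atTop (𝓝 0) := by
  have hpow : Tendsto (fun k => φ (k + 1) ^ n) atTop (𝓝 0) :=
    squeeze_zero (fun k => pow_nonneg (hφ0 _) n)
      (fun k => le_mul_of_one_le_left (pow_nonneg (hφ0 _) n)
        (one_le_pow₀ (le_add_of_nonneg_left k.cast_nonneg)))
      hsum.tendsto_atTop_zero
  have hinf : Tendsto φ atTop (𝓝 (⨅ k, φ k)) :=
    tendsto_atTop_ciInf hφ ⟨0, forall_mem_range.2 hφ0⟩
  have hinf0 : (⨅ k, φ k) ^ n = 0 :=
    tendsto_nhds_unique (((tendsto_add_atTop_iff_nat 1).2 hinf).pow n) hpow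
  rw [pow_eq_zero_iff hn] at hinf0
  rwa [hinf0] at hinf

end Condensation

section UnitSphere

variable {n : ℕ} {x z z' : Fin (n + 1) → ℝ}

theorem mem_unitSphere : x ∈ unitSphere n ↔ ∑ i, x i ^ 2 = 1 := Iff.rfl

theorem abs_le_one_of_mem_unitSphere (hx : x ∈ unitSphere n) (i : Fin (n + 1)) : |x i| ≤ 1 :=
  (sq_le_one_iff_abs_le_one _).1 <| mem_unitSphere.1 hx ▸
    Finset.single_le_sum (f := fun j => x j ^ 2) (fun j _ => sq_nonneg (x j)) (Finset.mem_univ i)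

theorem exists_inv_succ_le_abs_of_mem_unitSphere (hx : x ∈ unitSphere n) :
    ∃ i, 1 / ((n : ℝ) + 1) ≤ |x i| := by
  obtain ⟨i, -, hi⟩ := Finset.exists_le_of_sum_le (f := fun _ => 1 / ((n : ℝ) + 1))
    (g := fun j => x j ^ 2) Finset.univ_nonempty
    (by simp [mem_unitSphere.1 hx, mul_inv_cancel₀ (by positivity : (n : ℝ) + 1 ≠ 0)])
  refine ⟨i, hi.trans ?_⟩
  rw [← sq_abs]
  exact pow_le_of_le_one (abs_nonneg _) (abs_le_one_of_mem_unitSphere hx i) two_ne_zero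

theorem abs_le_of_ratPt_mem_unitSphere {p : Fin (n + 1) → ℤ} {q : ℕ} (hq : 0 < q)
    (h : ratPt n p q ∈ unitSphere n) (i : Fin (n + 1)) : |p i| ≤ q := by
  have := abs_le_one_of_mem_unitSphere h i
  rw [ratPt, abs_div, Nat.abs_cast, div_le_one (by exact_mod_cast hq)] at this
  exact_mod_cast this

theorem finite_setOf_ratPt_mem_unitSphere_lt (M : ℕ) :
    {pq : (Fin (n + 1) → ℤ) × ℕ |
      0 < pq.2 ∧ ratPt n pq.1 pq.2 ∈ unitSphere n ∧ pq.2 < M}.Finite := by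
  refine ((Set.Finite.pi fun _ => finite_Icc (-(M : ℤ)) M).prod (finite_Iio M)).subset ?_
  rintro ⟨p, q⟩ ⟨hq, hS, hqM⟩
  exact ⟨fun i _ => abs_le.1 <|
    (abs_le_of_ratPt_mem_unitSphere hq hS i).trans (by exact_mod_cast hqM.le), hqM⟩

theorem abs_sub_mul_abs_add_le_of_mem_unitSphere (hz : z ∈ unitSphere n)
    (hz' : z' ∈ unitSphere n) (i : Fin (n + 1)) :
    |z i - z' i| * |z i + z' i| ≤ 2 * n * dist (i.removeNth z) (i.removeNth z') := by
  set d := dist (i.removeNth z) (i.removeNth z')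
  have hsq : z i ^ 2 - z' i ^ 2 = ∑ j : Fin n,
      (z' (i.succAbove j) + z (i.succAbove j)) * (z' (i.succAbove j) - z (i.succAbove j)) := by
    have h := Fin.sum_univ_succAbove (fun j => z j ^ 2) i
    have h' := Fin.sum_univ_succAbove (fun j => z' j ^ 2) i
    rw [mem_unitSphere.1 hz] at h
    rw [mem_unitSphere.1 hz'] at h'
    simp only [← sq_sub_sq, Finset.sum_sub_distrib]
    linarith
  calc |z i - z' i| * |z i + z' i|
      = |∑ j : Fin n,
          (z' (i.succAbove j) + z (i.succAbove j)) *
            (z' (i.succAbove j) - z (i.succAbove j))| := by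
        rw [← abs_mul, ← hsq, sq_sub_sq, mul_comm]
    _ ≤ ∑ j : Fin n, 2 * d := by
        refine (Finset.abs_sum_le_sum_abs _ _).trans (Finset.sum_le_sum fun j _ => ?_)
        rw [abs_mul]
        gcongr
        · linarith [abs_add_le (z' (i.succAbove j)) (z (i.succAbove j)),
            abs_le_one_of_mem_unitSphere hz (i.succAbove j),
            abs_le_one_of_mem_unitSphere hz' (i.succAbove j)]
        · rw [← Real.dist_eq, dist_comm]
          exact dist_le_pi_dist (i.removeNth z) (i.removeNth z') j
    _ = 2 * n * d := by
        rw [Finset.sum_const, Finset.card_univ, Fintype.card_fin, nsmul_eq_mul]; ring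

end UnitSphere

section Caps

variable {n : ℕ} {x : Fin (n + 1) → ℝ} {r : ℝ}

theorem dist_le_mul_dist_removeNth_of_mem_cap {z z' : Fin (n + 1) → ℝ} {i : Fin (n + 1)}
    (hxi : 1 / ((n : ℝ) + 1) ≤ |x i|) (hr : r ≤ 1 / (2 * ((n : ℝ) + 1)))
    (hz : z ∈ closedBall x r ∩ unitSphere n) (hz' : z' ∈ closedBall x r ∩ unitSphere n) :
    dist z z' ≤ 2 * ((n : ℝ) + 1) ^ 2 * dist (i.removeNth z) (i.removeNth z') := by
  set d := dist (i.removeNth z) (i.removeNth z')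
  have hn : (0 : ℝ) < n + 1 := by positivity
  have hd : 0 ≤ d := dist_nonneg
  rw [dist_pi_le_iff (by positivity)]
  intro j
  by_cases hji : j = i
  · subst hji
    have hzj : |z j - x j| ≤ r := (dist_le_pi_dist z x j).trans (mem_closedBall.1 hz.1)
    have hz'j : |z' j - x j| ≤ r := (dist_le_pi_dist z' x j).trans (mem_closedBall.1 hz'.1)
    -- `z j` and `z' j` stay on the side of `x j`, so their sum is bounded away from zero
    have hadd : 1 / ((n : ℝ) + 1) ≤ |z j + z' j| := by
      have h2x : 2 * |x j| ≤ |z j + z' j| + (|z j - x j| + |z' j - x j|) :=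
        calc 2 * |x j| = |(z j + z' j) - ((z j - x j) + (z' j - x j))| := by
              rw [← abs_two, ← abs_mul]; ring_nf
          _ ≤ |z j + z' j| + (|z j - x j| + |z' j - x j|) :=
              (abs_sub _ _).trans (by gcongr; exact abs_add_le _ _)
      have h2r : 2 * r ≤ 1 / ((n : ℝ) + 1) := by
        rw [le_div_iff₀ (by positivity)] at hr
        rw [le_div_iff₀ hn]
        linarith
      linarith
    have hprod := (mul_le_mul_of_nonneg_left hadd (abs_nonneg _)).trans
      (abs_sub_mul_abs_add_le_of_mem_unitSphere hz.2 hz'.2 j)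
    rw [mul_one_div, div_le_iff₀ hn] at hprod
    rw [Real.dist_eq]
    nlinarith
  · obtain ⟨k, rfl⟩ := Fin.exists_succAbove_eq hji
    exact (dist_le_pi_dist (i.removeNth z) (i.removeNth z') k).trans
      (le_mul_of_one_le_left hd (by nlinarith))

theorem hausdorffMeasure_closedBall_inter_unitSphere_le (hx : x ∈ unitSphere n) (hr0 : 0 ≤ r)
    (hr : r ≤ 1 / (2 * ((n : ℝ) + 1))) :
    μH[n] (closedBall x r ∩ unitSphere n) ≤
      ENNReal.ofReal ((4 * ((n : ℝ) + 1) ^ 2 * r) ^ n) := by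
  obtain ⟨i, hxi⟩ := exists_inv_succ_le_abs_of_mem_unitSphere hx
  set C := closedBall x r ∩ unitSphere n
  set K : ℝ≥0 := 2 * ((n : ℝ≥0) + 1) ^ 2
  have hπ : AntilipschitzWith K fun z : C => i.removeNth (z : Fin (n + 1) → ℝ) :=
    AntilipschitzWith.of_le_mul_dist fun z z' => by
      simpa [K, Subtype.dist_eq] using dist_le_mul_dist_removeNth_of_mem_cap hxi hr z.2 z'.2
  have himage : (fun z : C => i.removeNth (z : Fin (n + 1) → ℝ)) '' univ ⊆
      closedBall (i.removeNth x) r := by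
    rintro _ ⟨z, -, rfl⟩
    exact (dist_pi_le_iff hr0).2 fun j => (dist_le_pi_dist _ x _).trans (mem_closedBall.1 z.2.1)
  have hvol : (μH[n] : Measure (Fin n → ℝ)) = volume := by
    simpa using hausdorffMeasure_pi_real (ι := Fin n)
  calc μH[n] C = μH[n] (univ : Set C) := by
        rw [← (isometry_subtype_coe (s := C)).hausdorffMeasure_image (Or.inl n.cast_nonneg),
          image_univ, Subtype.range_coe]
    _ ≤ (K : ℝ≥0∞) ^ (n : ℝ) * μH[n] (closedBall (i.removeNth x) r) :=
        (hπ.le_hausdorffMeasure_image n.cast_nonneg univ).trans (by gcongr)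
    _ = ENNReal.ofReal ((4 * ((n : ℝ) + 1) ^ 2 * r) ^ n) := by
        rw [hvol, Real.volume_pi_closedBall _ hr0, ENNReal.rpow_natCast, ← ENNReal.coe_pow,
          ← ENNReal.ofReal_coe_nnreal, ← ENNReal.ofReal_mul (by positivity), Fintype.card_fin]
        push_cast [K]
        rw [← mul_pow]
        congr 2
        ring

end Caps

section DyadicCover

variable {n : ℕ} {φ : ℕ → ℝ}

theorem restrict_unitSphere_biUnion_closedBall_le {P : Set (Fin (n + 1) → ℝ)} (hP : P.Finite)
    (hPS : P ⊆ unitSphere n) {r : ℝ} (hr0 : 0 ≤ r) (hr : r ≤ 1 / (2 * ((n : ℝ) + 1))) :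
    μH[n].restrict (unitSphere n) (⋃ x ∈ P, closedBall x r) ≤
      P.ncard * ENNReal.ofReal ((4 * ((n : ℝ) + 1) ^ 2 * r) ^ n) := by
  have hunion : ⋃ x ∈ P, closedBall x r = ⋃ x ∈ hP.toFinset, closedBall x r := by simp
  rw [hunion, Set.ncard_eq_toFinset_card P hP, ← nsmul_eq_mul]
  refine (measure_biUnion_finset_le _ _).trans (Finset.sum_le_card_nsmul _ _ _ fun x hx => ?_)
  rw [Measure.restrict_apply measurableSet_closedBall]
  exact hausdorffMeasure_closedBall_inter_unitSphere_le (hPS (hP.mem_toFinset.1 hx)) hr0 hr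

/-- Points `φ`-approximated by some `p/q` with `2^k ≤ q < 2^(k+1)` lie in the `k`-th cover. -/
def dyadicCover (n : ℕ) (φ : ℕ → ℝ) (k : ℕ) : Set (Fin (n + 1) → ℝ) :=
  ⋃ x ∈ ratPtsUpTo n (2 ^ (k + 1)), closedBall x (φ (2 ^ k))

theorem approxSet_subset_limsup_dyadicCover (hφ : Antitone φ) :
    approxSet n φ ⊆ limsup (dyadicCover n φ) atTop := by
  rintro α ⟨-, hinf⟩
  rw [mem_limsup_iff_frequently_mem, frequently_atTop]
  intro K
  obtain ⟨⟨p, q⟩, ⟨hq, hS, happ⟩, hqK⟩ :=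
    (hinf.sdiff (finite_setOf_ratPt_mem_unitSphere_lt (2 ^ K))).nonempty
  have hKq : 2 ^ K ≤ q := not_lt.1 fun h => hqK ⟨hq, hS, h⟩
  refine ⟨Nat.log 2 q, Nat.le_log_of_pow_le one_lt_two hKq,
    mem_biUnion ⟨hS, p, q, hq, ?_, rfl⟩ (mem_closedBall.2 ?_)⟩
  · exact_mod_cast (Nat.lt_pow_succ_log_self one_lt_two q).le
  · rw [dist_eq_norm]
    exact happ.le.trans (hφ (Nat.pow_log_le_self 2 hq.ne'))

theorem restrict_unitSphere_dyadicCover_le {c : ℝ} {k : ℕ}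
    (hfin : (ratPtsUpTo n (2 ^ (k + 1))).Finite)
    (hcard : ((ratPtsUpTo n (2 ^ (k + 1))).ncard : ℝ) ≤ c * (2 ^ (k + 1)) ^ n)
    (hφ0 : 0 ≤ φ (2 ^ k)) (hφr : φ (2 ^ k) ≤ 1 / (2 * ((n : ℝ) + 1))) :
    μH[n].restrict (unitSphere n) (dyadicCover n φ k) ≤
      ENNReal.ofReal (c * (8 * ((n : ℝ) + 1) ^ 2) ^ n * ((2 : ℝ) ^ k * φ (2 ^ k)) ^ n) := by
  refine (restrict_unitSphere_biUnion_closedBall_le hfin (fun x hx => hx.1) hφ0 hφr).trans ?_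
  rw [← ENNReal.ofReal_natCast, ← ENNReal.ofReal_mul' (by positivity)]
  refine ENNReal.ofReal_le_ofReal <|
    (mul_le_mul_of_nonneg_right hcard (by positivity)).trans_eq ?_
  rw [mul_assoc c, ← mul_pow, mul_assoc c, ← mul_pow]
  ring

end DyadicCover

theorem convergence_khintchine_sphere_general (n : ℕ) (hn : 1 ≤ n)
    (c : ℝ)
    (hcount : ∀ N : ℝ, 1 ≤ N → (ratPtsUpTo n N).Finite ∧
      ((ratPtsUpTo n N).ncard : ℝ) ≤ c * N ^ n)
    (φ : ℕ → ℝ) (hφpos : ∀ k, 0 < φ k) (hφanti : Antitone φ)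
    (hsum : Summable (fun k : ℕ => ((k : ℝ) + 1) ^ (n - 1) * φ (k + 1) ^ n)) :
    (μH[(n : ℝ)]).restrict (unitSphere n) (approxSet n φ) = 0 := by
  have hφ0 k := (hφpos k).le
  obtain ⟨K₀, hK₀⟩ := eventually_atTop.1 <|
    ((tendsto_zero_of_summable_pow_mul_pow (by omega) hφ0 hφanti hsum).comp
      (tendsto_pow_atTop_atTop_of_one_lt one_lt_two)).eventually
      (eventually_le_nhds (by positivity : (0 : ℝ) < 1 / (2 * ((n : ℝ) + 1))))
  have hcover k :=
    have hN := hcount (2 ^ (k + K₀ + 1)) (one_le_pow₀ one_le_two)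
    restrict_unitSphere_dyadicCover_le hN.1 hN.2 (hφ0 _) (hK₀ (k + K₀) le_add_self)
  have hsummable := (summable_nat_add_iff K₀).2 <|
    (summable_two_pow_mul_pow_of_summable hφ0 hφanti hsum).mul_left
      (c * (8 * ((n : ℝ) + 1) ^ 2) ^ n)
  refine measure_mono_null (approxSet_subset_limsup_dyadicCover hφanti) ?_
  rw [← limsup_nat_add _ K₀]
  exact measure_limsup_atTop_eq_zero <| ne_top_of_le_ne_top
    (ENNReal.tsum_coe_ne_top_iff_summable.2 hsummable.toNNReal) (ENNReal.tsum_le_tsum hcover)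

/-- Convergence case of Khintchine's theorem for the sphere, assuming the counting bound
`#{p/q ∈ Sⁿ : q ≤ N} ≤ c·Nⁿ`: if `φ : ℕ → (0,∞)` is non-increasing and
`∑_{k≥1} k^{n−1} φ(k)^n < ∞`, then `λ(A(φ,Sⁿ)) = 0`, where `λ` is the `n`-dimensional
Hausdorff measure restricted to `Sⁿ`. -/
theorem convergence_khintchine_sphere (n : ℕ) (hn : 1 ≤ n)
    (c : ℝ) (hc : 0 < c)
    (hcount : ∀ N : ℝ, 1 ≤ N → (ratPtsUpTo n N).Finite ∧
      ((ratPtsUpTo n N).ncard : ℝ) ≤ c * N ^ n)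
    (φ : ℕ → ℝ) (hφpos : ∀ k, 0 < φ k) (hφanti : Antitone φ)
    (hsum : Summable (fun k : ℕ => ((k : ℝ) + 1) ^ (n - 1) * φ (k + 1) ^ n)) :
    (μH[(n : ℝ)]).restrict (unitSphere n) (approxSet n φ) = 0 :=
  convergence_khintchine_sphere_general n hn c hcount φ hφpos hφanti hsum
end
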